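/- arXiv:math/0410438 — 9 statements merged into one kernel-verified Lean document; each statement's English description precedes it below -/
import Mathlib

section
/- Let α, Σ₀, Λ₀ be matrices of sizes N×N, N×N, N×2m with Σ₀ = Σ₀* and α invertible, satisfying αΣ₀ − Σ₀α* = i Λ₀Λ₀*. Define recursively Λ_{n+1} = Λ_n + i α⁻¹ Λ_n J and Σ_{n+1} = Σ_n + α⁻¹ Σ_n (α*)⁻¹ + α⁻¹ Λ_n J Λ_n* (α*)⁻¹, where J = diag(I_m, −I_m). Then for every n ≥ 0 the identity α Σ_n − Σ_n α* = i Λ_n Λ_n* holds. -/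
open Matrix

theorem stmt0 {N m : ℕ}
    (α : Matrix (Fin N) (Fin N) ℂ) (hα : IsUnit α)
    (Sig : ℕ → Matrix (Fin N) (Fin N) ℂ)
    (Λ : ℕ → Matrix (Fin N) (Fin m ⊕ Fin m) ℂ)
    (J : Matrix (Fin m ⊕ Fin m) (Fin m ⊕ Fin m) ℂ)
    (hJ : J = Matrix.fromBlocks 1 0 0 (-1))
    (hSig0 : (Sig 0)ᴴ = Sig 0)
    (h0 : α * Sig 0 - Sig 0 * αᴴ = Complex.I • (Λ 0 * (Λ 0)ᴴ))
    (hΛ : ∀ n, Λ (n + 1) = Λ n + Complex.I • (α⁻¹ * Λ n * J))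
    (hSig : ∀ n, Sig (n + 1) =
      Sig n + α⁻¹ * Sig n * (αᴴ)⁻¹ + α⁻¹ * Λ n * J * (Λ n)ᴴ * (αᴴ)⁻¹) :
    ∀ n, α * Sig n - Sig n * αᴴ = Complex.I • (Λ n * (Λ n)ᴴ) := by
  have hd : IsUnit α.det := (Matrix.isUnit_iff_isUnit_det α).mp hα
  have hαi : α * α⁻¹ = 1 := Matrix.mul_nonsing_inv α hd
  have hiα : α⁻¹ * α = 1 := Matrix.nonsing_inv_mul α hd
  have hH : (α⁻¹)ᴴ = (αᴴ)⁻¹ := Matrix.conjTranspose_nonsing_inv α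
  have hdH : IsUnit (αᴴ).det := by
    rw [Matrix.det_conjTranspose]; exact hd.star
  have hαHi : αᴴ * (αᴴ)⁻¹ = 1 := Matrix.mul_nonsing_inv _ hdH
  have hiαH : (αᴴ)⁻¹ * αᴴ = 1 := Matrix.nonsing_inv_mul _ hdH
  have hJH : Jᴴ = J := by
    rw [hJ, Matrix.fromBlocks_conjTranspose]
    simp
  have hJJ : J * J = 1 := by
    rw [hJ, Matrix.fromBlocks_multiply]
    simp [Matrix.fromBlocks_one]
  have c1 : ∀ {p : Type} (X : Matrix (Fin N) p ℂ), α * (α⁻¹ * X) = X := by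
    intro p X; rw [← Matrix.mul_assoc, hαi, Matrix.one_mul]
  have cJ : ∀ {p : Type} (X : Matrix (Fin m ⊕ Fin m) p ℂ), J * (J * X) = X := by
    intro p X; rw [← Matrix.mul_assoc, hJJ, Matrix.one_mul]
  intro n
  induction n with
  | zero => exact h0
  | succ n ih =>
    have key : α * Sig n = Complex.I • (Λ n * (Λ n)ᴴ) + Sig n * αᴴ := by
      have := eq_add_of_sub_eq ih
      simpa using this
    have e3 : Sig n * (αᴴ)⁻¹
        = α⁻¹ * Sig n + Complex.I • (α⁻¹ * (Λ n * ((Λ n)ᴴ * (αᴴ)⁻¹))) := by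
      have h1 : α⁻¹ * (α * Sig n) * (αᴴ)⁻¹ = Sig n * (αᴴ)⁻¹ := by
        rw [← mul_assoc, hiα, one_mul]
      rw [key] at h1
      rw [← h1]
      simp only [mul_add, add_mul, mul_smul_comm, smul_mul_assoc, Matrix.mul_assoc,
        hαHi, Matrix.mul_one]
      abel
    have hLH : (Λ n + Complex.I • (α⁻¹ * Λ n * J))ᴴ
        = (Λ n)ᴴ - Complex.I • (J * ((Λ n)ᴴ * (αᴴ)⁻¹)) := by
      rw [conjTranspose_add, conjTranspose_smul]
      rw [Matrix.conjTranspose_mul, Matrix.conjTranspose_mul, hJH, hH]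
      simp [Complex.conj_I, mul_assoc, sub_eq_add_neg]
    rw [hSig n, hΛ n, hLH]
    simp only [mul_add, add_mul, mul_sub, sub_mul, smul_mul_assoc, mul_smul_comm,
      smul_smul, Matrix.mul_assoc, smul_add, smul_sub, c1, cJ,
      Complex.I_mul_I, neg_smul, one_smul, neg_neg, smul_neg,
      hiαH, hαHi, Matrix.mul_one]
    rw [key, e3]
    simp only [Matrix.mul_add, Matrix.add_mul, Matrix.mul_sub, Matrix.sub_mul,
      Matrix.smul_mul, Matrix.mul_smul, smul_smul, Matrix.mul_assoc, smul_add,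
      smul_sub, cJ, Complex.I_mul_I, neg_smul, one_smul, neg_neg, smul_neg]
    abel
end

section
/- Let α, Σ_n, Λ_n satisfy αΣ_n − Σ_nα* = iΛ_nΛ_n* with Σ_n positive definite and invertible. Then for every λ in the open lower half plane (Im λ < 0) and every λ not in the spectrum of α, W_{α,Λ}(n,λ)* W_{α,Λ}(n,λ) ≤ I_{2m} in the sense of Hermitian matrices, where W_{α,Λ}(n,λ) = I_{2m} + iΛ_n*Σ_n⁻¹(λI_N − α)⁻¹Λ_n. -/
/-!
Put `P = Σ⁻¹`, `X = (λ - α)⁻¹ Λ` and `Y = Λᴴ P X`, so that `W = 1 + i Y`. Conjugating the Lyapunov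
identity by `P` gives `P α - αᴴ P = i P Λ Λᴴ P`; sandwiching it between `Xᴴ` and `X` and using
`α X = λ X - Λ` yields `i Yᴴ Y = (λ - conj λ) Xᴴ P X - Yᴴ + Y`. Hence
`1 - Wᴴ W = i (λ - conj λ) Xᴴ P X = -2 (Im λ) Xᴴ P X`, which is positive semidefinite since `P` is.
-/

open Matrix
open scoped ComplexOrder

theorem Complex.zero_le_I_mul_sub_conj {z : ℂ} (hz : z.im ≤ 0) :
    0 ≤ Complex.I * (z - starRingEnd ℂ z) := by
  rw [Complex.sub_conj, Complex.nonneg_iff]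
  exact ⟨by simpa using mul_nonpos_of_nonneg_of_nonpos zero_le_two hz, by simp⟩

namespace Matrix

variable {n k : Type*} [Fintype n] [DecidableEq n] [Fintype k]

theorem inv_mul_sub_conjTranspose_mul_inv_eq_smul {α S : Matrix n n ℂ} {Λ : Matrix n k ℂ}
    (hS : IsUnit S) (h : α * S - S * αᴴ = Complex.I • (Λ * Λᴴ)) :
    S⁻¹ * α - αᴴ * S⁻¹ = Complex.I • (S⁻¹ * Λ * Λᴴ * S⁻¹) := by
  have hS' := (isUnit_iff_isUnit_det S).mp hS
  calc S⁻¹ * α - αᴴ * S⁻¹ = S⁻¹ * (α * S - S * αᴴ) * S⁻¹ := by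
        simp only [Matrix.mul_sub, Matrix.sub_mul, Matrix.mul_assoc, mul_nonsing_inv _ hS',
          nonsing_inv_mul_cancel_left _ _ hS', Matrix.mul_one]
    _ = _ := by simp only [h, Matrix.mul_smul, Matrix.smul_mul, Matrix.mul_assoc]

theorem one_sub_conjTranspose_mul_self_eq_smul [DecidableEq k] {α P : Matrix n n ℂ}
    {Λ X : Matrix n k ℂ} {lam : ℂ} (hP : Pᴴ = P)
    (h : P * α - αᴴ * P = Complex.I • (P * Λ * Λᴴ * P)) (hX : (lam • 1 - α) * X = Λ) :
    1 - (1 + Complex.I • (Λᴴ * P * X))ᴴ * (1 + Complex.I • (Λᴴ * P * X))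
      = (Complex.I * (lam - starRingEnd ℂ lam)) • (Xᴴ * P * X) := by
  set Y := Λᴴ * P * X
  have hαX : α * X = lam • X - Λ := by
    rw [← hX, Matrix.sub_mul, Matrix.smul_mul, Matrix.one_mul, sub_sub_cancel]
  have hYH : Yᴴ = Xᴴ * P * Λ := by simp [Y, conjTranspose_mul, hP, Matrix.mul_assoc]
  have key : Complex.I • (Yᴴ * Y) = (lam - starRingEnd ℂ lam) • (Xᴴ * P * X) - Yᴴ + Y :=
    calc Complex.I • (Yᴴ * Y) = Xᴴ * (P * α - αᴴ * P) * X := by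
          rw [h, hYH]; simp only [Y, Matrix.mul_smul, Matrix.smul_mul, Matrix.mul_assoc]
      _ = Xᴴ * P * (α * X) - (α * X)ᴴ * P * X := by
          simp only [conjTranspose_mul, Matrix.mul_sub, Matrix.sub_mul, Matrix.mul_assoc]
      _ = _ := by
          rw [hαX, hYH]
          simp only [conjTranspose_sub, conjTranspose_smul, Matrix.mul_sub, Matrix.sub_mul,
            Matrix.mul_smul, Matrix.smul_mul, Y, Complex.star_def, sub_smul]
          abel
  rw [conjTranspose_add, conjTranspose_one, conjTranspose_smul, Complex.star_def, Complex.conj_I]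
  simp only [Matrix.add_mul, Matrix.mul_add, Matrix.one_mul, Matrix.mul_one, Matrix.smul_mul,
    Matrix.mul_smul]
  linear_combination (norm := module) Complex.I • key

end Matrix

theorem stmt4_general {N m : ℕ}
    (α : Matrix (Fin N) (Fin N) ℂ)
    (Sig : Matrix (Fin N) (Fin N) ℂ)
    (Λ : Matrix (Fin N) (Fin m ⊕ Fin m) ℂ)
    (hid : α * Sig - Sig * αᴴ = Complex.I • (Λ * Λᴴ))
    (hSigpos : Sig.PosDef)
    (lam : ℂ) (him : lam.im < 0)
    (hl : IsUnit (lam • (1 : Matrix (Fin N) (Fin N) ℂ) - α)) :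
    (1 -
      (1 + Complex.I • (Λᴴ * Sig⁻¹ * (lam • (1 : Matrix (Fin N) (Fin N) ℂ) - α)⁻¹ * Λ))ᴴ *
      (1 + Complex.I • (Λᴴ * Sig⁻¹ * (lam • (1 : Matrix (Fin N) (Fin N) ℂ) - α)⁻¹ * Λ))).PosSemidef := by
  have hP := hSigpos.inv.posSemidef
  have hX : (lam • 1 - α) * ((lam • 1 - α)⁻¹ * Λ) = Λ :=
    mul_nonsing_inv_cancel_left _ _ ((isUnit_iff_isUnit_det _).mp hl)
  rw [Matrix.mul_assoc _ _ Λ, one_sub_conjTranspose_mul_self_eq_smul hP.isHermitian.eq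
    (inv_mul_sub_conjTranspose_mul_inv_eq_smul hSigpos.isUnit hid) hX]
  exact (hP.conjTranspose_mul_mul_same _).smul (Complex.zero_le_I_mul_sub_conj him.le)

theorem stmt4 {N m : ℕ}
    (α : Matrix (Fin N) (Fin N) ℂ)
    (Sig : Matrix (Fin N) (Fin N) ℂ)
    (Λ : Matrix (Fin N) (Fin m ⊕ Fin m) ℂ)
    (hid : α * Sig - Sig * αᴴ = Complex.I • (Λ * Λᴴ))
    (hSigpos : Sig.PosDef) (hSiginv : IsUnit Sig)
    (lam : ℂ) (him : lam.im < 0)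
    (hl : IsUnit (lam • (1 : Matrix (Fin N) (Fin N) ℂ) - α)) :
    (1 -
      (1 + Complex.I • (Λᴴ * Sig⁻¹ * (lam • (1 : Matrix (Fin N) (Fin N) ℂ) - α)⁻¹ * Λ))ᴴ *
      (1 + Complex.I • (Λᴴ * Sig⁻¹ * (lam • (1 : Matrix (Fin N) (Fin N) ℂ) - α)⁻¹ * Λ))).PosSemidef :=
  stmt4_general α Sig Λ hid hSigpos lam him hl
end

section
/- Let α be an N×N complex matrix and θ₁, θ₂ be N×m complex matrices satisfying α − α* = i(θ₁θ₁* + θ₂θ₂*). If the pair {α, θ₁} is full range (controllable), i.e. span of the columns of θ₁, αθ₁, ..., α^{N−1}θ₁ is all of ℂ^N, then every eigenvalue of α lies in the open upper half plane (has strictly positive imaginary part). In particular α is invertible. -/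
open Matrix

private lemma dotH {N p : ℕ} (M : Matrix (Fin N) (Fin p) ℂ) (u : Fin N → ℂ) (v : Fin p → ℂ) :
    star u ⬝ᵥ (M *ᵥ v) = star (Mᴴ *ᵥ u) ⬝ᵥ v := by
  rw [star_mulVec, conjTranspose_conjTranspose, dotProduct_mulVec]

private lemma dps {n : ℕ} (y : Fin n → ℂ) :
    star y ⬝ᵥ y = ((∑ i, Complex.normSq (y i) : ℝ) : ℂ) := by
  push_cast
  simp only [dotProduct, Complex.normSq_eq_conj_mul_self]
  rfl

theorem stmt5 {N m : ℕ}
    (α : Matrix (Fin N) (Fin N) ℂ)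
    (θ₁ θ₂ : Matrix (Fin N) (Fin m) ℂ)
    (hid : α - αᴴ = Complex.I • (θ₁ * θ₁ᴴ + θ₂ * θ₂ᴴ))
    (hfr : Submodule.span ℂ
      {x : Fin N → ℂ | ∃ k < N, ∃ v : Fin m → ℂ, x = (α ^ k * θ₁) *ᵥ v} = ⊤) :
    (∀ μ ∈ spectrum ℂ α, 0 < μ.im) ∧ IsUnit α := by
  have key : ∀ μ ∈ spectrum ℂ α, 0 < μ.im := by
    intro μ hμ
    -- get an eigenvector
    rw [spectrum.mem_iff] at hμ
    rw [Matrix.isUnit_iff_isUnit_det, isUnit_iff_ne_zero, not_ne_iff] at hμ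
    obtain ⟨x, hx0, hx⟩ := (Matrix.exists_mulVec_eq_zero_iff).2 hμ
    have heig : α *ᵥ x = μ • x := by
      have h1 : (algebraMap ℂ (Matrix (Fin N) (Fin N) ℂ) μ) *ᵥ x = μ • x := by
        rw [Algebra.algebraMap_eq_smul_one, Matrix.smul_mulVec, Matrix.one_mulVec]
      rw [sub_mulVec, sub_eq_zero, h1] at hx
      exact hx.symm
    set y₁ : Fin m → ℂ := θ₁ᴴ *ᵥ x with hy₁
    set y₂ : Fin m → ℂ := θ₂ᴴ *ᵥ x with hy₂
    set c : ℝ := ∑ i, Complex.normSq (x i) with hc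
    set n₁ : ℝ := ∑ i, Complex.normSq (y₁ i) with hn₁
    set n₂ : ℝ := ∑ i, Complex.normSq (y₂ i) with hn₂
    have hcpos : 0 < c := by
      rcases Function.ne_iff.1 hx0 with ⟨i, hi⟩
      exact Finset.sum_pos' (fun j _ => Complex.normSq_nonneg _)
        ⟨i, Finset.mem_univ i, by simpa [Complex.normSq_pos] using hi⟩
    have hn₁0 : 0 ≤ n₁ := Finset.sum_nonneg fun j _ => Complex.normSq_nonneg _
    have hn₂0 : 0 ≤ n₂ := Finset.sum_nonneg fun j _ => Complex.normSq_nonneg _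
    -- main identity
    have hL : star x ⬝ᵥ ((α - αᴴ) *ᵥ x) = (μ - starRingEnd ℂ μ) * (c : ℂ) := by
      rw [sub_mulVec, dotProduct_sub, heig, dotProduct_smul]
      have h2 : star x ⬝ᵥ (αᴴ *ᵥ x) = starRingEnd ℂ μ * (star x ⬝ᵥ x) := by
        rw [dotH, conjTranspose_conjTranspose, heig]
        rw [star_smul, smul_dotProduct, smul_eq_mul, ← starRingEnd_apply]
      rw [h2, dps x, ← hc]
      simp only [smul_eq_mul]
      ring
    have hR : star x ⬝ᵥ ((Complex.I • (θ₁ * θ₁ᴴ + θ₂ * θ₂ᴴ)) *ᵥ x)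
        = Complex.I * ((n₁ : ℂ) + (n₂ : ℂ)) := by
      rw [Matrix.smul_mulVec, dotProduct_smul, add_mulVec,
        dotProduct_add, ← Matrix.mulVec_mulVec, ← Matrix.mulVec_mulVec,
        dotH θ₁ x, dotH θ₂ x, ← hy₁, ← hy₂, dps y₁, dps y₂, ← hn₁, ← hn₂]
      rfl
    have hEq : (μ - starRingEnd ℂ μ) * (c : ℂ) = Complex.I * ((n₁ : ℂ) + (n₂ : ℂ)) := by
      rw [← hL, ← hR, hid]
    -- take imaginary parts
    have him : 2 * μ.im * c = n₁ + n₂ := by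
      have := congrArg Complex.im hEq
      rw [Complex.sub_conj] at this
      simpa [Complex.mul_im, Complex.mul_re] using this
    have himnn : 0 ≤ μ.im := by nlinarith
    rcases lt_or_eq_of_le himnn with h | h
    · exact h
    · -- μ.im = 0 : derive a contradiction via full range
      exfalso
      have hμim : μ.im = 0 := h.symm
      have hn₁z : n₁ = 0 := by nlinarith
      have hn₂z : n₂ = 0 := by nlinarith
      have hy₁z : y₁ = 0 := by
        funext i
        have : Complex.normSq (y₁ i) = 0 :=
          (Finset.sum_eq_zero_iff_of_nonneg
            (fun j _ => Complex.normSq_nonneg (y₁ j))).1 (hn₁ ▸ hn₁z) i (Finset.mem_univ i)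
        simpa [Complex.normSq_eq_zero] using this
      have hy₂z : y₂ = 0 := by
        funext i
        have : Complex.normSq (y₂ i) = 0 :=
          (Finset.sum_eq_zero_iff_of_nonneg
            (fun j _ => Complex.normSq_nonneg (y₂ j))).1 (hn₂ ▸ hn₂z) i (Finset.mem_univ i)
        simpa [Complex.normSq_eq_zero] using this
      have hμreal : starRingEnd ℂ μ = μ := Complex.conj_eq_iff_im.2 hμim
      -- αᴴ *ᵥ x = μ • x
      have hadj : αᴴ *ᵥ x = μ • x := by
        have h3 : αᴴ = α - Complex.I • (θ₁ * θ₁ᴴ + θ₂ * θ₂ᴴ) := by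
          rw [← hid, sub_sub_cancel]
        rw [h3, sub_mulVec, heig, Matrix.smul_mulVec, add_mulVec,
          ← Matrix.mulVec_mulVec, ← Matrix.mulVec_mulVec, ← hy₁, ← hy₂, hy₁z, hy₂z]
        simp
      have hadjpow : ∀ k : ℕ, (αᴴ ^ k) *ᵥ x = μ ^ k • x := by
        intro k
        induction k with
        | zero => simp
        | succ n ih =>
          rw [pow_succ', ← Matrix.mulVec_mulVec, ih, Matrix.mulVec_smul, hadj,
            smul_smul, pow_succ', mul_comm]
      -- functional vanishes on spanning set
      have hvan : ∀ y ∈ Submodule.span ℂ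
          {x : Fin N → ℂ | ∃ k < N, ∃ v : Fin m → ℂ, x = (α ^ k * θ₁) *ᵥ v},
          star x ⬝ᵥ y = 0 := by
        intro y hy
        induction hy using Submodule.span_induction with
        | mem z hz =>
          obtain ⟨k, _, v, rfl⟩ := hz
          rw [← Matrix.mulVec_mulVec, dotH, conjTranspose_pow, hadjpow, star_smul,
            smul_dotProduct, dotH, ← hy₁, hy₁z]
          simp
        | zero => simp
        | add a b _ _ ha hb => rw [dotProduct_add, ha, hb, add_zero]
        | smul r a _ ha => rw [dotProduct_smul, ha, smul_zero]
      have := hvan x (hfr ▸ Submodule.mem_top)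
      rw [dps x, ← hc] at this
      exact absurd (by exact_mod_cast this) (ne_of_gt hcpos)
  refine ⟨key, ?_⟩
  by_contra h
  have := key 0 ((spectrum.zero_mem_iff ℂ).2 h)
  simp at this
end

section
/- Let α be an N×N complex matrix with spectrum in the open upper half plane, θ₁, θ₂ N×m matrices with α − α* = i(θ₁θ₁* + θ₂θ₂*), and assume {α, θ₁} is full range. Set Σ₀ = I_N and Λ_n = [(I_N + iα⁻¹)^n θ₁, (I_N − iα⁻¹)^n θ₂]. Then the matrices Σ_n defined by Σ_{n+1} = Σ_n + α⁻¹Σ_n(α*)⁻¹ + α⁻¹Λ_nJΛ_n*(α*)⁻¹ (with J = diag(I_m, −I_m)) are positive definite for all n ≥ 0 and satisfy αΣ_n − Σ_nα* = iΛ_nΛ_n*. -/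
/-!
The identity `α Σₙ - Σₙ αᴴ = i Λₙ Λₙᴴ` propagates along the recursion by direct computation.
For positivity, let `z` be an eigenvector of `Σₙ` with eigenvalue `t ≤ 0`. Evaluating
`α - αᴴ = i K Kᴴ` (`K = [θ₁ θ₂]`) and the Lyapunov identity on `z` gives
`‖Λₙᴴ z‖² = t ‖Kᴴ z‖² ≤ 0`, so `Λₙᴴ z = 0`, and then `αᴴ z` lies again in the `t`-eigenspace.
Hence `Λₙᴴ (αᴴ)ᵏ z = 0` for all `k`. The first block of `Λₙ` is `(1 + i α⁻¹)ⁿ θ₁`, and since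
`(1 + i α⁻¹)ⁿ` is invertible and commutes with `α`, the full-range property of `{α, θ₁}`
forces `z = 0`.
-/

open Matrix
open scoped ComplexOrder

section

variable {n ι κ : Type*}

lemma star_dotProduct_mulVec [Fintype n] [Fintype ι] (M : Matrix n ι ℂ) (z : n → ℂ)
    (v : ι → ℂ) : star z ⬝ᵥ (M *ᵥ v) = star (Mᴴ *ᵥ z) ⬝ᵥ v := by
  rw [star_mulVec, conjTranspose_conjTranspose, dotProduct_mulVec]

lemma star_dotProduct_mul_conjTranspose_mulVec [Fintype n] [Fintype ι] (M : Matrix n ι ℂ)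
    (z : n → ℂ) : star z ⬝ᵥ ((M * Mᴴ) *ᵥ z) = star (Mᴴ *ᵥ z) ⬝ᵥ (Mᴴ *ᵥ z) := by
  rw [← mulVec_mulVec, star_dotProduct_mulVec]

lemma eq_zero_of_forall_star_dotProduct_eq_zero [Fintype n] {s : Set (n → ℂ)}
    (hs : Submodule.span ℂ s = ⊤) {z : n → ℂ} (hz : ∀ x ∈ s, star z ⬝ᵥ x = 0) : z = 0 := by
  have h : dotProductBilin ℂ ℂ (star z) = 0 := LinearMap.ext_on hs hz
  exact dotProduct_star_self_eq_zero.mp (LinearMap.congr_fun h z)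

lemma eq_zero_of_span_krylov_eq_top [Fintype n] [DecidableEq n] [Fintype ι]
    {α : Matrix n n ℂ} {θ : Matrix n ι ℂ} {r : ℕ}
    (hfr : Submodule.span ℂ {x | ∃ k < r, ∃ v : ι → ℂ, x = (α ^ k * θ) *ᵥ v} = ⊤)
    {z : n → ℂ} (hz : ∀ k < r, θᴴ *ᵥ ((αᴴ) ^ k *ᵥ z) = 0) : z = 0 := by
  refine eq_zero_of_forall_star_dotProduct_eq_zero hfr ?_
  rintro _ ⟨k, hk, v, rfl⟩
  rw [star_dotProduct_mulVec, conjTranspose_mul, conjTranspose_pow, ← mulVec_mulVec, hz k hk,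
    star_zero, zero_dotProduct]

lemma lyapunov_nonpos_eigenvector [Fintype n] [Fintype ι] [Fintype κ] {α S : Matrix n n ℂ}
    {K : Matrix n ι ℂ} {L : Matrix n κ ℂ} (hS : S.IsHermitian)
    (hα : α - αᴴ = Complex.I • (K * Kᴴ)) (hlyap : α * S - S * αᴴ = Complex.I • (L * Lᴴ))
    {t : ℝ} (ht : t ≤ 0) {z : n → ℂ} (hz : S *ᵥ z = (t : ℂ) • z) :
    Lᴴ *ᵥ z = 0 ∧ S *ᵥ (αᴴ *ᵥ z) = (t : ℂ) • (αᴴ *ᵥ z) := by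
  have hzS : star z ⬝ᵥ ((S * αᴴ) *ᵥ z) = t * star z ⬝ᵥ (αᴴ *ᵥ z) := by
    rw [← mulVec_mulVec, star_dotProduct_mulVec, hS.eq, hz, star_smul, smul_dotProduct,
      Complex.star_def, Complex.conj_ofReal, smul_eq_mul]
  have hSz : star z ⬝ᵥ ((α * S) *ᵥ z) = t * star z ⬝ᵥ (α *ᵥ z) := by
    rw [← mulVec_mulVec, hz, mulVec_smul, dotProduct_smul, smul_eq_mul]
  have hquad : star (Lᴴ *ᵥ z) ⬝ᵥ (Lᴴ *ᵥ z) = t * star (Kᴴ *ᵥ z) ⬝ᵥ (Kᴴ *ᵥ z) := by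
    have hK := congrArg (fun M => star z ⬝ᵥ (M *ᵥ z)) hα
    have hL := congrArg (fun M => star z ⬝ᵥ (M *ᵥ z)) hlyap
    simp only [sub_mulVec, dotProduct_sub, smul_mulVec, dotProduct_smul, smul_eq_mul,
      star_dotProduct_mul_conjTranspose_mulVec, hSz, hzS] at hK hL
    apply mul_left_cancel₀ Complex.I_ne_zero
    rw [← hL, ← mul_sub, hK]
    ring
  have hnonpos : t * star (Kᴴ *ᵥ z) ⬝ᵥ (Kᴴ *ᵥ z) ≤ 0 :=
    mul_nonpos_of_nonpos_of_nonneg (by exact_mod_cast ht) (dotProduct_star_self_nonneg _)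
  have hL0 : star (Lᴴ *ᵥ z) ⬝ᵥ (Lᴴ *ᵥ z) = 0 :=
    le_antisymm (hquad ▸ hnonpos) (dotProduct_star_self_nonneg _)
  have htK : (t : ℂ) • ((K * Kᴴ) *ᵥ z) = 0 := by
    rcases mul_eq_zero.mp (hquad ▸ hL0) with h | h
    · rw [h, zero_smul]
    · rw [← mulVec_mulVec, dotProduct_star_self_eq_zero.mp h, mulVec_zero, smul_zero]
  have hLz : Lᴴ *ᵥ z = 0 := dotProduct_star_self_eq_zero.mp hL0
  refine ⟨hLz, ?_⟩
  have hSα : S *ᵥ (αᴴ *ᵥ z) = (t : ℂ) • (α *ᵥ z) := by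
    have h := congrArg (· *ᵥ z) hlyap
    simp only [sub_mulVec, smul_mulVec, ← mulVec_mulVec, hLz, hz, mulVec_zero, smul_zero,
      mulVec_smul, sub_eq_zero] at h
    exact h.symm
  have hαz : (t : ℂ) • (α *ᵥ z) = (t : ℂ) • (αᴴ *ᵥ z) := by
    have h := congrArg (fun M => (t : ℂ) • (M *ᵥ z)) hα
    simp only [sub_mulVec, smul_sub, smul_mulVec, smul_comm (t : ℂ) Complex.I, htK, smul_zero,
      sub_eq_zero] at h
    exact h
  rw [hSα, hαz]

lemma posDef_of_lyapunov [Fintype n] [DecidableEq n] [Fintype ι] [Fintype κ]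
    {α S : Matrix n n ℂ} {K : Matrix n ι ℂ} {L : Matrix n κ ℂ} (hS : S.IsHermitian)
    (hα : α - αᴴ = Complex.I • (K * Kᴴ)) (hlyap : α * S - S * αᴴ = Complex.I • (L * Lᴴ))
    (hobs : ∀ z : n → ℂ, (∀ k : ℕ, Lᴴ *ᵥ ((αᴴ) ^ k *ᵥ z) = 0) → z = 0) : S.PosDef := by
  refine hS.posDef_iff_eigenvalues_pos.mpr fun i => ?_
  by_contra! ht
  set z : n → ℂ := ⇑(hS.eigenvectorBasis i)
  have hz : S *ᵥ z = (hS.eigenvalues i : ℂ) • z := by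
    simpa [Complex.real_smul] using hS.mulVec_eigenvectorBasis i
  have horbit : ∀ k : ℕ, S *ᵥ ((αᴴ) ^ k *ᵥ z) = (hS.eigenvalues i : ℂ) • ((αᴴ) ^ k *ᵥ z) := by
    intro k
    induction k with
    | zero => simpa using hz
    | succ k ih =>
      rw [pow_succ', ← mulVec_mulVec]
      exact (lyapunov_nonpos_eigenvector hS hα hlyap ht ih).2
  have hz0 : z = 0 := hobs z fun k => (lyapunov_nonpos_eigenvector hS hα hlyap ht (horbit k)).1
  exact hS.eigenvectorBasis.orthonormal.ne_zero i (by ext j; exact congrFun hz0 j)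

lemma fromCols_mul_conjTranspose_fromCols [Fintype ι] [Fintype κ] (A : Matrix n ι ℂ)
    (B : Matrix n κ ℂ) : fromCols A B * (fromCols A B)ᴴ = A * Aᴴ + B * Bᴴ := by
  rw [conjTranspose_fromCols_eq_fromRows_conjTranspose, fromCols_mul_fromRows]

lemma fromCols_mul_signature_mul_conjTranspose_fromCols [Fintype ι] [Fintype κ] [DecidableEq ι]
    [DecidableEq κ] (A : Matrix n ι ℂ) (B : Matrix n κ ℂ) :
    fromCols A B * (fromBlocks 1 0 0 (-1) : Matrix (ι ⊕ κ) (ι ⊕ κ) ℂ) * (fromCols A B)ᴴ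
      = A * Aᴴ - B * Bᴴ := by
  rw [fromCols_mul_fromBlocks, conjTranspose_fromCols_eq_fromRows_conjTranspose,
    fromCols_mul_fromRows]
  simp [sub_eq_add_neg]

lemma conjTranspose_mulVec_eq_zero_of_fromCols [Fintype n] {A : Matrix n ι ℂ}
    {B : Matrix n κ ℂ} {w : n → ℂ} (h : (fromCols A B)ᴴ *ᵥ w = 0) : Aᴴ *ᵥ w = 0 := by
  rw [conjTranspose_fromCols_eq_fromRows_conjTranspose, fromRows_mulVec] at h
  simpa using congrArg (· ∘ Sum.inl) h

lemma conjTranspose_one_add_I_smul_inv [Fintype n] [DecidableEq n] (α : Matrix n n ℂ) :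
    (1 + Complex.I • α⁻¹)ᴴ = 1 - Complex.I • (αᴴ)⁻¹ := by
  simp [conjTranspose_nonsing_inv, sub_eq_add_neg]

lemma conjTranspose_one_sub_I_smul_inv [Fintype n] [DecidableEq n] (α : Matrix n n ℂ) :
    (1 - Complex.I • α⁻¹)ᴴ = 1 + Complex.I • (αᴴ)⁻¹ := by
  simp [conjTranspose_nonsing_inv, sub_eq_add_neg]

lemma lyapunov_step [Fintype n] [DecidableEq n] {α S P Q : Matrix n n ℂ} [Invertible α]
    (h : α * S - S * αᴴ = Complex.I • (P + Q)) :
    α * (S + α⁻¹ * S * (αᴴ)⁻¹ + α⁻¹ * (P - Q) * (αᴴ)⁻¹)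
      - (S + α⁻¹ * S * (αᴴ)⁻¹ + α⁻¹ * (P - Q) * (αᴴ)⁻¹) * αᴴ
      = Complex.I • ((1 + Complex.I • α⁻¹) * P * (1 + Complex.I • α⁻¹)ᴴ
        + (1 - Complex.I • α⁻¹) * Q * (1 - Complex.I • α⁻¹)ᴴ) := by
  have hconj : ∀ X, α * (α⁻¹ * X * (αᴴ)⁻¹) - α⁻¹ * X * (αᴴ)⁻¹ * αᴴ = X * (αᴴ)⁻¹ - α⁻¹ * X :=
    fun X => by simp [Matrix.mul_assoc]
  have hS : S * (αᴴ)⁻¹ - α⁻¹ * S = α⁻¹ * (Complex.I • (P + Q)) * (αᴴ)⁻¹ := by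
    rw [← h, ← hconj]
    simp [Matrix.mul_sub, Matrix.sub_mul, Matrix.mul_assoc]
  calc _ = (α * S - S * αᴴ) + (S * (αᴴ)⁻¹ - α⁻¹ * S)
        + ((P - Q) * (αᴴ)⁻¹ - α⁻¹ * (P - Q)) := by
        rw [← hconj S, ← hconj (P - Q)]
        simp only [Matrix.mul_add, Matrix.add_mul]
        abel
    _ = _ := by
        rw [h, hS, conjTranspose_one_add_I_smul_inv, conjTranspose_one_sub_I_smul_inv]
        simp only [Matrix.mul_add, Matrix.add_mul, Matrix.mul_sub, Matrix.sub_mul,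
          Matrix.mul_smul, Matrix.smul_mul, Matrix.mul_one, Matrix.one_mul, Matrix.mul_assoc,
          smul_add, smul_sub, smul_smul, Complex.I_mul_I, neg_smul, one_smul]
        module

lemma isUnit_one_add_smul_inv [Fintype n] [DecidableEq n] {α : Matrix n n ℂ} (hα : IsUnit α)
    {c : ℂ} (hc : -c ∉ spectrum ℂ α) : IsUnit (1 + c • α⁻¹) := by
  have hαc : IsUnit (α + c • 1) := by
    simpa [Algebra.algebraMap_eq_smul_one, sub_eq_add_neg, add_comm]
      using (spectrum.notMem_iff.mp hc).neg
  have h : 1 + c • α⁻¹ = α⁻¹ * (α + c • 1) := by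
    rw [Matrix.mul_add, nonsing_inv_mul _ ((isUnit_iff_isUnit_det α).mp hα), mul_smul_comm,
      Matrix.mul_one]
  rw [h]
  exact (isUnit_nonsing_inv_iff.mpr hα).mul hαc

lemma commute_one_add_smul_inv [Fintype n] [DecidableEq n] (α : Matrix n n ℂ) [Invertible α]
    (c : ℂ) : Commute α (1 + c • α⁻¹) :=
  (Commute.one_right α).add_right
    ((show Commute α α⁻¹ from (mul_inv_of_invertible α).trans (inv_mul_of_invertible α).symm)
      |>.smul_right c)

lemma eq_zero_of_span_krylov_eq_top_of_fromCols [Fintype n] [DecidableEq n] [Fintype ι]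
    {α G : Matrix n n ℂ} {θ : Matrix n ι ℂ} {B : Matrix n κ ℂ} {r : ℕ}
    (hfr : Submodule.span ℂ {x | ∃ k < r, ∃ v : ι → ℂ, x = (α ^ k * θ) *ᵥ v} = ⊤)
    (hαG : Commute α G) (hG : IsUnit G) {z : n → ℂ}
    (hz : ∀ k, (fromCols (G * θ) B)ᴴ *ᵥ ((αᴴ) ^ k *ᵥ z) = 0) : z = 0 := by
  have hcomm : ∀ k, (αᴴ) ^ k * Gᴴ = Gᴴ * (αᴴ) ^ k := fun k => by
    rw [← conjTranspose_pow, ← conjTranspose_mul, ← conjTranspose_mul, (hαG.pow_left k).eq]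
  have hGz : Gᴴ *ᵥ z = 0 := eq_zero_of_span_krylov_eq_top hfr fun k _ => by
    have h := conjTranspose_mulVec_eq_zero_of_fromCols (hz k)
    rw [conjTranspose_mul, ← mulVec_mulVec] at h
    rwa [mulVec_mulVec z, hcomm, ← mulVec_mulVec]
  exact mulVec_injective_iff_isUnit.mpr hG.star (hGz.trans (mulVec_zero _).symm)

lemma isHermitian_and_lyapunov_of_recursion [Fintype n] [DecidableEq n] [Fintype ι]
    [DecidableEq ι] [Fintype κ] [DecidableEq κ] {α : Matrix n n ℂ} [Invertible α]
    {θ₁ : Matrix n ι ℂ} {θ₂ : Matrix n κ ℂ} (hid : α - αᴴ = Complex.I • (θ₁ * θ₁ᴴ + θ₂ * θ₂ᴴ))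
    {Λ : ℕ → Matrix n (ι ⊕ κ) ℂ}
    (hΛ : ∀ k, Λ k = fromCols ((1 + Complex.I • α⁻¹) ^ k * θ₁) ((1 - Complex.I • α⁻¹) ^ k * θ₂))
    {S : ℕ → Matrix n n ℂ} (hS0 : S 0 = 1)
    (hS : ∀ k, S (k + 1) = S k + α⁻¹ * S k * (αᴴ)⁻¹
      + α⁻¹ * Λ k * (fromBlocks 1 0 0 (-1) : Matrix (ι ⊕ κ) (ι ⊕ κ) ℂ) * (Λ k)ᴴ * (αᴴ)⁻¹)
    (k : ℕ) : (S k).IsHermitian ∧ α * S k - S k * αᴴ = Complex.I • (Λ k * (Λ k)ᴴ) := by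
  have hrec : ∀ k, S (k + 1) = S k + α⁻¹ * S k * (αᴴ)⁻¹
      + α⁻¹ * (((1 + Complex.I • α⁻¹) ^ k * θ₁) * ((1 + Complex.I • α⁻¹) ^ k * θ₁)ᴴ
        - ((1 - Complex.I • α⁻¹) ^ k * θ₂) * ((1 - Complex.I • α⁻¹) ^ k * θ₂)ᴴ) * (αᴴ)⁻¹ := by
    intro k
    rw [hS k, ← fromCols_mul_signature_mul_conjTranspose_fromCols, ← hΛ k]
    simp only [Matrix.mul_assoc]
  induction k with
  | zero => simpa [hS0, hΛ 0, fromCols_mul_conjTranspose_fromCols] using hid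
  | succ k ih =>
    refine ⟨?_, ?_⟩
    · rw [hrec k, ← conjTranspose_nonsing_inv]
      exact (ih.1.add (isHermitian_mul_mul_conjTranspose _ ih.1)).add
        (isHermitian_mul_mul_conjTranspose _
          ((isHermitian_mul_conjTranspose_self _).sub (isHermitian_mul_conjTranspose_self _)))
    · rw [hΛ k, fromCols_mul_conjTranspose_fromCols] at ih
      rw [hrec k, hΛ (k + 1), fromCols_mul_conjTranspose_fromCols, pow_succ', pow_succ']
      simpa only [conjTranspose_mul, Matrix.mul_assoc] using lyapunov_step ih.2

end

theorem stmt7 {N m : ℕ}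
    (α : Matrix (Fin N) (Fin N) ℂ)
    (hspec : ∀ μ ∈ spectrum ℂ α, 0 < μ.im)
    (θ₁ θ₂ : Matrix (Fin N) (Fin m) ℂ)
    (hid : α - αᴴ = Complex.I • (θ₁ * θ₁ᴴ + θ₂ * θ₂ᴴ))
    (hfr : Submodule.span ℂ
      {x : Fin N → ℂ | ∃ k < N, ∃ v : Fin m → ℂ, x = (α ^ k * θ₁) *ᵥ v} = ⊤)
    (J : Matrix (Fin m ⊕ Fin m) (Fin m ⊕ Fin m) ℂ)
    (hJ : J = Matrix.fromBlocks 1 0 0 (-1))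
    (Λ : ℕ → Matrix (Fin N) (Fin m ⊕ Fin m) ℂ)
    (hΛ : ∀ n, Λ n = Matrix.fromCols
      (((1 : Matrix (Fin N) (Fin N) ℂ) + Complex.I • α⁻¹) ^ n * θ₁)
      (((1 : Matrix (Fin N) (Fin N) ℂ) - Complex.I • α⁻¹) ^ n * θ₂))
    (Sig : ℕ → Matrix (Fin N) (Fin N) ℂ)
    (hSig0 : Sig 0 = 1)
    (hSig : ∀ n, Sig (n + 1) =
      Sig n + α⁻¹ * Sig n * (αᴴ)⁻¹ + α⁻¹ * Λ n * J * (Λ n)ᴴ * (αᴴ)⁻¹) :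
    ∀ n, (Sig n).PosDef ∧ α * Sig n - Sig n * αᴴ = Complex.I • (Λ n * (Λ n)ᴴ) := by
  subst hJ
  have hαu : IsUnit α := (spectrum.zero_notMem_iff ℂ).mp fun h => (hspec 0 h).false
  let := hαu.invertible
  have hCu : IsUnit (1 + Complex.I • α⁻¹) :=
    isUnit_one_add_smul_inv hαu fun h => absurd (hspec _ h) (by norm_num)
  have hK : α - αᴴ = Complex.I • (fromCols θ₁ θ₂ * (fromCols θ₁ θ₂)ᴴ) := by
    rwa [fromCols_mul_conjTranspose_fromCols]
  intro n
  have hlyap := isHermitian_and_lyapunov_of_recursion hid hΛ hSig0 hSig n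
  refine ⟨posDef_of_lyapunov hlyap.1 hK hlyap.2 fun z hz => ?_, hlyap.2⟩
  exact eq_zero_of_span_krylov_eq_top_of_fromCols hfr
    ((commute_one_add_smul_inv α Complex.I).pow_right n) (hCu.pow n) (hΛ n ▸ hz)
end

section
/- Let α, Σ_n, Λ_n, S_n be as in the FG construction: αΣ_n − Σ_nα* = iΛ_nΛ_n*, Λ_{n+1} = Λ_n + iα⁻¹Λ_nJ, Σ_{n+1} = Σ_n + α⁻¹Σ_n(α*)⁻¹ + α⁻¹Λ_nJΛ_n*(α*)⁻¹, S_n = J + Λ_n*Σ_n⁻¹Λ_n − Λ_{n+1}*Σ_{n+1}⁻¹Λ_{n+1}, with all Σ_n invertible. Then the transfer functions W_{α,Λ}(n,λ) = I_{2m} + iΛ_n*Σ_n⁻¹(λI_N − α)⁻¹Λ_n satisfy the intertwining equality W_{α,Λ}(n+1, λ)(I_{2m} − (i/λ)J) = (I_{2m} − (i/λ)S_n) W_{α,Λ}(n, λ) for all λ ∉ σ(α) ∪ {0}. -/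
open Matrix

/-- Abstract core of the FG intertwining identity. All inverses and conjugate
transposes are passed as abstract matrices satisfying the needed relations. -/
theorem FG_key {Nt Mt : Type} [Fintype Nt] [Fintype Mt] [DecidableEq Nt] [DecidableEq Mt]
    (lam : ℂ) (hlam : lam ≠ 0)
    (a ai aH aiH Sg Sgi Sg' Sgi' R : Matrix Nt Nt ℂ)
    (L L' : Matrix Nt Mt ℂ) (LH L'H : Matrix Mt Nt ℂ) (J : Matrix Mt Mt ℂ)
    (hai : a * ai = 1) (hia : ai * a = 1)
    (haH : aH * aiH = 1) (hiaH : aiH * aH = 1)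
    (hSS : Sg * Sgi = 1) (hSSi : Sgi * Sg = 1)
    (hSS' : Sg' * Sgi' = 1) (hSSi' : Sgi' * Sg' = 1)
    (hR1 : (lam • (1 : Matrix Nt Nt ℂ) - a) * R = 1)
    (hR2 : R * (lam • (1 : Matrix Nt Nt ℂ) - a) = 1)
    (hJJ : J * J = 1)
    (hidn : a * Sg - Sg * aH = Complex.I • (L * LH))
    (hidn1 : a * Sg' - Sg' * aH = Complex.I • (L' * L'H))
    (hL' : L' = L + Complex.I • (ai * L * J))
    (hL'H : L'H = LH - Complex.I • (J * LH * aiH))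
    (hSig' : Sg' = Sg + ai * Sg * aiH + ai * L * J * LH * aiH) :
    (1 + Complex.I • (L'H * Sgi' * R * L')) * (1 - (Complex.I / lam) • J) =
      (1 - (Complex.I / lam) • (J + LH * Sgi * L - L'H * Sgi' * L')) *
        (1 + Complex.I • (LH * Sgi * R * L)) := by
  -- cancellation helpers
  have c1 : ∀ {P : Type} (X : Matrix Nt P ℂ), a * (ai * X) = X := fun X => by
    rw [← Matrix.mul_assoc, hai, Matrix.one_mul]
  have c2 : ∀ {P : Type} (X : Matrix Nt P ℂ), ai * (a * X) = X := fun X => by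
    rw [← Matrix.mul_assoc, hia, Matrix.one_mul]
  have c3 : ∀ {P : Type} (X : Matrix Nt P ℂ), aH * (aiH * X) = X := fun X => by
    rw [← Matrix.mul_assoc, haH, Matrix.one_mul]
  have c4 : ∀ {P : Type} (X : Matrix Nt P ℂ), aiH * (aH * X) = X := fun X => by
    rw [← Matrix.mul_assoc, hiaH, Matrix.one_mul]
  have cS1 : ∀ {P : Type} (X : Matrix Nt P ℂ), Sg * (Sgi * X) = X := fun X => by
    rw [← Matrix.mul_assoc, hSS, Matrix.one_mul]
  have cS2 : ∀ {P : Type} (X : Matrix Nt P ℂ), Sgi * (Sg * X) = X := fun X => by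
    rw [← Matrix.mul_assoc, hSSi, Matrix.one_mul]
  have cS2' : ∀ {P : Type} (X : Matrix Nt P ℂ), Sgi' * (Sg' * X) = X := fun X => by
    rw [← Matrix.mul_assoc, hSSi', Matrix.one_mul]
  -- a commutes with R
  have hcomm : a * R = R * a := by
    have h1 : (lam • (1 : Matrix Nt Nt ℂ) - a) * a = a * (lam • (1 : Matrix Nt Nt ℂ) - a) := by
      simp only [Matrix.sub_mul, Matrix.mul_sub, Matrix.smul_mul, Matrix.mul_smul,
        Matrix.one_mul, Matrix.mul_one]
    calc a * R = (R * (lam • (1 : Matrix Nt Nt ℂ) - a)) * (a * R) := by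
          rw [hR2, Matrix.one_mul]
      _ = R * (((lam • (1 : Matrix Nt Nt ℂ) - a) * a) * R) := by
          simp only [Matrix.mul_assoc]
      _ = R * (a * ((lam • (1 : Matrix Nt Nt ℂ) - a) * R)) := by
          rw [h1, Matrix.mul_assoc]
      _ = R * a := by rw [hR1, Matrix.mul_one]
  have hiaR : ai * R = R * ai := by
    have h := congrArg (fun X => ai * X * ai) hcomm
    simp only [Matrix.mul_assoc] at h
    rw [hai, Matrix.mul_one] at h
    rw [c2] at h
    exact h.symm
  have hαR : a * R = lam • R - 1 := by
    have h := hR1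
    simp only [Matrix.sub_mul, Matrix.smul_mul, Matrix.one_mul] at h
    rw [← h]; abel
  have hkey : lam • (R * ai) - R = ai := by
    have h := hR1
    simp only [Matrix.sub_mul, Matrix.smul_mul, Matrix.one_mul] at h
    have h3 := congrArg (fun X => ai * X) h
    simp only [Matrix.mul_sub, Matrix.mul_smul, Matrix.mul_one] at h3
    rw [c2] at h3
    rw [← hiaR]
    exact h3
  have hL'J : L' * J = L * J + Complex.I • (ai * L) := by
    rw [hL']
    simp only [Matrix.add_mul, Matrix.smul_mul, Matrix.mul_assoc, hJJ, Matrix.mul_one]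
  have hIL' : Complex.I • L' = Complex.I • L - ai * (L * J) := by
    rw [hL']
    simp only [smul_add, smul_smul, Complex.I_mul_I, neg_one_smul, Matrix.mul_assoc]
    abel
  have hLL : L * LH = Complex.I • (Sg * aH) - Complex.I • (a * Sg) := by
    have h2 := congrArg (fun X => (-Complex.I) • X) hidn
    simp only [smul_sub, smul_smul, neg_mul, Complex.I_mul_I, neg_neg, one_smul, neg_smul] at h2
    rw [← h2]; abel
  have hLL' : L' * L'H = Complex.I • (Sg' * aH) - Complex.I • (a * Sg') := by
    have h2 := congrArg (fun X => (-Complex.I) • X) hidn1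
    simp only [smul_sub, smul_smul, neg_mul, Complex.I_mul_I, neg_neg, one_smul, neg_smul] at h2
    rw [← h2]; abel
  have haS' : a * Sg' = a * Sg + Sg * aiH + L * (J * (LH * aiH)) := by
    rw [hSig']
    simp only [Matrix.mul_add, Matrix.mul_assoc, c1]
  have hLHc : LH = L'H + Complex.I • (J * (LH * aiH)) := by
    rw [hL'H]
    simp only [Matrix.mul_assoc]
    abel
  have haRL : a * (R * L) = lam • (R * L) - L := by
    rw [← Matrix.mul_assoc, hαR]
    simp only [Matrix.sub_mul, Matrix.smul_mul, Matrix.one_mul]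
  have hRai : ∀ {P : Type} (X : Matrix Nt P ℂ), R * (ai * X) = ai * (R * X) := fun X => by
    rw [← Matrix.mul_assoc, ← hiaR, Matrix.mul_assoc]
  have cJ : ∀ {P : Type} (X : Matrix Mt P ℂ), J * (J * X) = X := fun X => by
    rw [← Matrix.mul_assoc, hJJ, Matrix.one_mul]
  -- ∀-ized versions of the key identities
  have hLLX : ∀ {P : Type} (X : Matrix Nt P ℂ),
      L * (LH * X) = Complex.I • (Sg * (aH * X)) - Complex.I • (a * (Sg * X)) := fun X => by
    rw [← Matrix.mul_assoc, hLL]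
    simp only [Matrix.sub_mul, Matrix.smul_mul, Matrix.mul_assoc]
  have hLL'X : ∀ {P : Type} (X : Matrix Nt P ℂ),
      L' * (L'H * X) = Complex.I • (Sg' * (aH * X)) - Complex.I • (a * (Sg' * X)) := fun X => by
    rw [← Matrix.mul_assoc, hLL']
    simp only [Matrix.sub_mul, Matrix.smul_mul, Matrix.mul_assoc]
  have hL'LHX : ∀ {P : Type} (X : Matrix Nt P ℂ),
      L' * (LH * X) = Complex.I • (Sg' * (aH * X)) - Complex.I • (a * (Sg' * X))
        + Complex.I • (L' * (J * (LH * (aiH * X)))) := fun X => by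
    calc L' * (LH * X) = L' * ((L'H + Complex.I • (J * (LH * aiH))) * X) := by rw [← hLHc]
      _ = L' * (L'H * X) + Complex.I • (L' * (J * (LH * (aiH * X)))) := by
          simp only [Matrix.add_mul, Matrix.smul_mul, Matrix.mul_add, Matrix.mul_smul,
            Matrix.mul_assoc]
      _ = _ := by rw [hLL'X]
  have hLHaHX : ∀ {P : Type} (X : Matrix Nt P ℂ),
      LH * (aH * X) = L'H * (aH * X) + Complex.I • (J * (LH * X)) := fun X => by
    calc LH * (aH * X) = (L'H + Complex.I • (J * (LH * aiH))) * (aH * X) := by rw [← hLHc]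
      _ = L'H * (aH * X) + Complex.I • (J * (LH * (aiH * (aH * X)))) := by
          simp only [Matrix.add_mul, Matrix.smul_mul, Matrix.mul_assoc]
      _ = _ := by rw [c4]
  -- Step 1: the left-hand side of the master identity
  have hE1 : (lam * Complex.I) • (R * L') + R * (L' * J)
      = (lam * Complex.I) • (R * L) + Complex.I • (R * (ai * L)) - ai * (L * J) := by
    have hkey2 := congrArg (fun X => X * (L * J)) hkey
    simp only [Matrix.sub_mul, Matrix.smul_mul, Matrix.mul_assoc] at hkey2
    rw [hL'J, hL']
    simp only [Matrix.mul_add, Matrix.mul_smul, smul_add, smul_smul, Matrix.mul_assoc,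
      mul_assoc, Complex.I_mul_I, mul_neg_one, neg_smul]
    conv_rhs => rw [← hkey2]
    module
  have hLHSeq : (lam * Complex.I) • (L'H * Sgi' * R * L') + L'H * Sgi' * R * L' * J
      = L'H * (Sgi' * ((lam * Complex.I) • (R * L) + Complex.I • (R * (ai * L)) - ai * (L * J))) := by
    rw [← hE1]
    simp only [Matrix.mul_add, Matrix.mul_smul, Matrix.mul_assoc]
  -- Step 2: the central vector identity
  have hG : (lam * Complex.I) • (R * L) + Complex.I • (R * (ai * L)) - ai * (L * J)
      = Complex.I • L' + Complex.I • (a * (Sg' * (Sgi * (R * L))))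
        - Complex.I • (L' * (J * (LH * (aiH * (Sgi * (R * L)))))) := by
    simp only [hL', hSig', Matrix.mul_add, Matrix.add_mul, Matrix.mul_sub, Matrix.sub_mul,
      Matrix.mul_smul, Matrix.smul_mul, smul_add, smul_sub, smul_smul, Matrix.mul_assoc,
      mul_assoc, Complex.I_mul_I, mul_neg_one, neg_smul, neg_neg, Matrix.mul_one,
      Matrix.one_mul, c1, c2, c3, c4, cS1, cS2, cJ, hLLX, haRL, hRai]
    module
  -- Step 3: the right-hand side of the master identity
  have hRHSeq : (lam * Complex.I) • (LH * Sgi * R * L) - Complex.I • (LH * Sgi * L)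
        + Complex.I • (L'H * Sgi' * L')
        + (J + LH * Sgi * L - L'H * Sgi' * L') * (LH * Sgi * R * L)
      = L'H * (Sgi' * (Complex.I • L' + Complex.I • (a * (Sg' * (Sgi * (R * L))))
          - Complex.I • (L' * (J * (LH * (aiH * (Sgi * (R * L)))))))) := by
    simp only [Matrix.mul_add, Matrix.add_mul, Matrix.mul_sub, Matrix.sub_mul,
      Matrix.mul_smul, Matrix.smul_mul, smul_add, smul_sub, smul_smul, Matrix.mul_assoc,
      mul_assoc, Complex.I_mul_I, mul_neg_one, neg_smul, neg_neg, Matrix.mul_one,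
      Matrix.one_mul, hLLX, hL'LHX, hLHaHX, haRL, cS1, cS2, cS2', c2]
    module
  -- the master identity
  have M : (lam * Complex.I) • (L'H * Sgi' * R * L') + L'H * Sgi' * R * L' * J
      = (lam * Complex.I) • (LH * Sgi * R * L) - Complex.I • (LH * Sgi * L)
        + Complex.I • (L'H * Sgi' * L')
        + (J + LH * Sgi * L - L'H * Sgi' * L') * (LH * Sgi * R * L) := by
    rw [hLHSeq, hG]
    exact hRHSeq.symm
  -- final assembly
  have s1 : (1 / lam) * (lam * Complex.I) = Complex.I := by field_simp
  have s3 : Complex.I * (Complex.I / lam) = -(1 / lam) := by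
    rw [← mul_div_assoc, Complex.I_mul_I]; ring
  have s4 : Complex.I / lam * Complex.I = -(1 / lam) := by
    rw [div_mul_eq_mul_div, Complex.I_mul_I]; ring
  rw [← sub_eq_zero]
  have hM0 : ((lam * Complex.I) • (L'H * Sgi' * R * L') + L'H * Sgi' * R * L' * J)
      - ((lam * Complex.I) • (LH * Sgi * R * L) - Complex.I • (LH * Sgi * L)
        + Complex.I • (L'H * Sgi' * L')
        + (J + LH * Sgi * L - L'H * Sgi' * L') * (LH * Sgi * R * L)) = 0 :=
    sub_eq_zero.mpr M
  calc (1 + Complex.I • (L'H * Sgi' * R * L')) * (1 - (Complex.I / lam) • J)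
        - (1 - (Complex.I / lam) • (J + LH * Sgi * L - L'H * Sgi' * L'))
          * (1 + Complex.I • (LH * Sgi * R * L))
      = (1 / lam) • (((lam * Complex.I) • (L'H * Sgi' * R * L') + L'H * Sgi' * R * L' * J)
        - ((lam * Complex.I) • (LH * Sgi * R * L) - Complex.I • (LH * Sgi * L)
          + Complex.I • (L'H * Sgi' * L')
          + (J + LH * Sgi * L - L'H * Sgi' * L') * (LH * Sgi * R * L))) := by
        simp only [Matrix.mul_add, Matrix.add_mul, Matrix.mul_sub, Matrix.sub_mul,
          Matrix.mul_one, Matrix.one_mul, Matrix.smul_mul, Matrix.mul_smul,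
          smul_add, smul_sub, smul_smul, s1, s3, s4, neg_smul, neg_neg, Matrix.mul_assoc]
        module
    _ = 0 := by rw [hM0, smul_zero]

theorem stmt8 {N m : ℕ}
    (α : Matrix (Fin N) (Fin N) ℂ) (hα : IsUnit α)
    (J : Matrix (Fin m ⊕ Fin m) (Fin m ⊕ Fin m) ℂ)
    (hJ : J = Matrix.fromBlocks 1 0 0 (-1))
    (Sig : ℕ → Matrix (Fin N) (Fin N) ℂ)
    (Λ : ℕ → Matrix (Fin N) (Fin m ⊕ Fin m) ℂ)
    (hid : ∀ n, α * Sig n - Sig n * αᴴ = Complex.I • (Λ n * (Λ n)ᴴ))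
    (hΛ : ∀ n, Λ (n + 1) = Λ n + Complex.I • (α⁻¹ * Λ n * J))
    (hSig : ∀ n, Sig (n + 1) =
      Sig n + α⁻¹ * Sig n * (αᴴ)⁻¹ + α⁻¹ * Λ n * J * (Λ n)ᴴ * (αᴴ)⁻¹)
    (hinv : ∀ n, IsUnit (Sig n))
    (S : ℕ → Matrix (Fin m ⊕ Fin m) (Fin m ⊕ Fin m) ℂ)
    (hS : ∀ n, S n =
      J + (Λ n)ᴴ * (Sig n)⁻¹ * Λ n - (Λ (n + 1))ᴴ * (Sig (n + 1))⁻¹ * Λ (n + 1))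
    (W : ℕ → ℂ → Matrix (Fin m ⊕ Fin m) (Fin m ⊕ Fin m) ℂ)
    (hW : ∀ n lam, W n lam = 1 + Complex.I •
      ((Λ n)ᴴ * (Sig n)⁻¹ * (lam • (1 : Matrix (Fin N) (Fin N) ℂ) - α)⁻¹ * Λ n)) :
    ∀ (n : ℕ) (lam : ℂ), lam ≠ 0 →
      IsUnit (lam • (1 : Matrix (Fin N) (Fin N) ℂ) - α) →
      W (n + 1) lam * (1 - (Complex.I / lam) • J) =
        (1 - (Complex.I / lam) • S n) * W n lam := by
  intro n lam hlam hU
  rw [hW, hW, hS]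
  have hJJ : J * J = 1 := by
    rw [hJ]
    simp [Matrix.fromBlocks_multiply, ← Matrix.fromBlocks_one]
  have hJH : Jᴴ = J := by
    rw [hJ]
    simp [Matrix.fromBlocks_conjTranspose]
  have hαd : IsUnit α.det := (Matrix.isUnit_iff_isUnit_det α).1 hα
  have hαHd : IsUnit αᴴ.det := by
    rw [Matrix.det_conjTranspose]; exact hαd.star
  have hSd : ∀ k, IsUnit (Sig k).det := fun k => (Matrix.isUnit_iff_isUnit_det _).1 (hinv k)
  have hUd : IsUnit (lam • (1 : Matrix (Fin N) (Fin N) ℂ) - α).det :=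
    (Matrix.isUnit_iff_isUnit_det _).1 hU
  have hL'H : (Λ (n + 1))ᴴ = (Λ n)ᴴ - Complex.I • (J * (Λ n)ᴴ * (αᴴ)⁻¹) := by
    rw [hΛ n]
    simp only [Matrix.conjTranspose_add, Matrix.conjTranspose_smul, Matrix.conjTranspose_mul,
      Matrix.conjTranspose_nonsing_inv, hJH, Complex.star_def, Complex.conj_I, neg_smul,
      Matrix.mul_assoc]
    abel
  exact FG_key lam hlam α α⁻¹ αᴴ (αᴴ)⁻¹ (Sig n) (Sig n)⁻¹ (Sig (n + 1)) (Sig (n + 1))⁻¹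
    ((lam • (1 : Matrix (Fin N) (Fin N) ℂ) - α)⁻¹) (Λ n) (Λ (n + 1)) (Λ n)ᴴ (Λ (n + 1))ᴴ J
    (Matrix.mul_nonsing_inv α hαd) (Matrix.nonsing_inv_mul α hαd)
    (Matrix.mul_nonsing_inv _ hαHd) (Matrix.nonsing_inv_mul _ hαHd)
    (Matrix.mul_nonsing_inv _ (hSd n)) (Matrix.nonsing_inv_mul _ (hSd n))
    (Matrix.mul_nonsing_inv _ (hSd (n + 1))) (Matrix.nonsing_inv_mul _ (hSd (n + 1)))
    (Matrix.mul_nonsing_inv _ hUd) (Matrix.nonsing_inv_mul _ hUd)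
    hJJ (hid n) (hid (n + 1)) (hΛ n) hL'H (hSig n)
end

section
/- Under the hypotheses of the FG construction with Σ_n invertible for 0 ≤ n ≤ M, the fundamental solution W_n(λ) of the discrete system W_{n+1}(λ) = (I_{2m} − (i/λ)S_n) W_n(λ), W_0(λ) = I_{2m}, is given explicitly by W_n(λ) = W_{α,Λ}(n,λ) (I_{2m} − (i/λ)J)^n W_{α,Λ}(0,λ)⁻¹ for 0 ≤ n ≤ M, for λ invertible and outside the spectrum of α (and where W_{α,Λ}(0,λ) is invertible). -/
open Matrix


private lemma fg_intertwine {N m : ℕ}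
    (α Sg Sg' : Matrix (Fin N) (Fin N) ℂ) (hα : IsUnit α)
    (J : Matrix (Fin m ⊕ Fin m) (Fin m ⊕ Fin m) ℂ)
    (hJ : J = Matrix.fromBlocks 1 0 0 (-1))
    (L L' : Matrix (Fin N) (Fin m ⊕ Fin m) ℂ)
    (hid : α * Sg - Sg * αᴴ = Complex.I • (L * Lᴴ))
    (hΛ : L' = L + Complex.I • (α⁻¹ * L * J))
    (hSig : Sg' = Sg + α⁻¹ * Sg * (αᴴ)⁻¹ + α⁻¹ * L * J * Lᴴ * (αᴴ)⁻¹)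
    (hSg : IsUnit Sg) (hSg' : IsUnit Sg')
    (lam : ℂ) (hlam : lam ≠ 0)
    (hres : IsUnit (lam • (1 : Matrix (Fin N) (Fin N) ℂ) - α)) :
    (1 + Complex.I • (L'ᴴ * Sg'⁻¹ * (lam • (1 : Matrix (Fin N) (Fin N) ℂ) - α)⁻¹ * L'))
      * (1 - (Complex.I / lam) • J)
    = (1 - (Complex.I / lam) • (J + Lᴴ * Sg⁻¹ * L - L'ᴴ * Sg'⁻¹ * L'))
      * (1 + Complex.I • (Lᴴ * Sg⁻¹ * (lam • (1 : Matrix (Fin N) (Fin N) ℂ) - α)⁻¹ * L)) := by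
  set P := Sg⁻¹ with hP
  set P' := Sg'⁻¹ with hP'
  set R := (lam • (1 : Matrix (Fin N) (Fin N) ℂ) - α)⁻¹ with hR
  have udet : ∀ (A : Matrix (Fin N) (Fin N) ℂ), IsUnit A → IsUnit A.det :=
    fun A h => (Matrix.isUnit_iff_isUnit_det A).1 h
  have hαH : IsUnit αᴴ := by
    rw [Matrix.isUnit_iff_isUnit_det, Matrix.det_conjTranspose]
    exact (udet α hα).star
  have hαα : α * α⁻¹ = 1 := Matrix.mul_nonsing_inv α (udet α hα)
  have hαα' : α⁻¹ * α = 1 := Matrix.nonsing_inv_mul α (udet α hα)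
  have hαHα : (αᴴ)⁻¹ * αᴴ = 1 := Matrix.nonsing_inv_mul _ (udet _ hαH)
  have hSgP : Sg * P = 1 := Matrix.mul_nonsing_inv Sg (udet Sg hSg)
  have hPSg : P * Sg = 1 := Matrix.nonsing_inv_mul Sg (udet Sg hSg)
  have hSgP' : Sg' * P' = 1 := Matrix.mul_nonsing_inv Sg' (udet Sg' hSg')
  have hPSg' : P' * Sg' = 1 := Matrix.nonsing_inv_mul Sg' (udet Sg' hSg')
  have hRres : (lam • (1 : Matrix (Fin N) (Fin N) ℂ) - α) * R = 1 :=
    Matrix.mul_nonsing_inv _ (udet _ hres)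
  have hresR : R * (lam • (1 : Matrix (Fin N) (Fin N) ℂ) - α) = 1 :=
    Matrix.nonsing_inv_mul _ (udet _ hres)
  -- λ • R = 1 + α * R
  have hlamR : lam • R = 1 + α * R := by
    have := hRres
    rw [sub_mul, smul_mul_assoc, one_mul] at this
    linear_combination (norm := noncomm_ring) this
  -- α commutes with R
  have hcomm : ∀ (B : Matrix (Fin N) (Fin N) ℂ),
      B * (lam • (1 : Matrix (Fin N) (Fin N) ℂ) - α) = (lam • 1 - α) * B → B * R = R * B := by
    intro B hB
    calc B * R = (R * (lam • 1 - α)) * (B * R) := by rw [hresR, one_mul]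
    _ = R * ((lam • 1 - α) * B) * R := by noncomm_ring
    _ = R * (B * (lam • 1 - α)) * R := by rw [hB]
    _ = (R * B) * ((lam • 1 - α) * R) := by noncomm_ring
    _ = R * B := by rw [hRres, mul_one]
  have hαR : α * R = R * α := by
    apply hcomm; noncomm_ring
  have hαR' : α⁻¹ * R = R * α⁻¹ := by
    apply hcomm
    rw [sub_mul, mul_sub, smul_mul_assoc, mul_smul_comm, one_mul, mul_one]
    have : α⁻¹ * α = α * α⁻¹ := by rw [hαα, hαα']
    rw [this]
  -- J facts
  have hJ2 : J * J = 1 := by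
    rw [hJ]; simp [Matrix.fromBlocks_multiply]
  have hJH : Jᴴ = J := by
    rw [hJ]; simp [Matrix.fromBlocks_conjTranspose]
  -- conj transpose of recursion
  have hL'H : L'ᴴ = Lᴴ - Complex.I • (J * Lᴴ * (αᴴ)⁻¹) := by
    rw [hΛ]
    simp [Matrix.conjTranspose_add, Matrix.conjTranspose_smul, Matrix.conjTranspose_mul,
      Matrix.conjTranspose_nonsing_inv, hJH, Complex.star_def, Complex.conj_I, mul_assoc]
    rw [Matrix.mul_assoc, sub_eq_add_neg]
  have hJLH : J * Lᴴ = Complex.I • ((L'ᴴ - Lᴴ) * αᴴ) := by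
    have hd : L'ᴴ - Lᴴ = -(Complex.I • (J * Lᴴ * αᴴ⁻¹)) := by rw [hL'H]; abel
    rw [hd]
    simp only [Matrix.neg_mul, smul_neg, smul_smul, Complex.I_mul_I, neg_smul, one_smul,
      neg_neg, Matrix.smul_mul, Matrix.mul_assoc, hαHα, Matrix.mul_one]
  -- identity (1.4) manipulations
  have hD : αᴴ * P = P * α - Complex.I • (P * (L * Lᴴ) * P) := by
    have h1 : P * (α * Sg - Sg * αᴴ) * P = Complex.I • (P * (L * Lᴴ) * P) := by
      rw [hid, mul_smul_comm, smul_mul_assoc]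
    have h2 : P * (α * Sg - Sg * αᴴ) * P = P * α - αᴴ * P := by
      rw [mul_sub, sub_mul]
      rw [show P * (α * Sg) * P = P * α by rw [mul_assoc, mul_assoc, hSgP, mul_one],
          show P * (Sg * αᴴ) * P = αᴴ * P by rw [← mul_assoc, hPSg, one_mul]]
    rw [← h1, h2]; noncomm_ring
  -- claim C : Sg' * αᴴ = (α + α⁻¹) * Sg - I • (L' * Lᴴ)
  have hC : Sg' * αᴴ = (α + α⁻¹) * Sg - Complex.I • (L' * Lᴴ) := by
    rw [hSig, hΛ]
    have e1 : α⁻¹ * Sg * (αᴴ)⁻¹ * αᴴ = α⁻¹ * Sg := by rw [mul_assoc, hαHα, mul_one]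
    have e2 : α⁻¹ * L * J * Lᴴ * (αᴴ)⁻¹ * αᴴ = α⁻¹ * (L * J * Lᴴ) := by
      rw [Matrix.mul_assoc, hαHα, Matrix.mul_one]; simp [Matrix.mul_assoc]
    have e3 : Sg * αᴴ = α * Sg - Complex.I • (L * Lᴴ) := by
      linear_combination (norm := noncomm_ring) -hid
    rw [Matrix.add_mul, Matrix.add_mul, e1, e2, e3, Matrix.add_mul]
    simp only [Matrix.add_mul, Matrix.smul_mul, smul_add, smul_smul, Complex.I_mul_I,
      neg_smul, one_smul, Matrix.mul_assoc]
    abel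
  have hB : αᴴ * P = P' * (α + α⁻¹) - Complex.I • (P' * (L' * Lᴴ) * P) := by
    have h1 : P' * (Sg' * αᴴ) * P = P' * ((α + α⁻¹) * Sg - Complex.I • (L' * Lᴴ)) * P := by
      rw [hC]
    rw [show P' * (Sg' * αᴴ) * P = αᴴ * P by rw [← mul_assoc, hPSg', one_mul]] at h1
    rw [h1, mul_sub, sub_mul, mul_smul_comm, smul_mul_assoc]
    rw [show P' * ((α + α⁻¹) * Sg) * P = P' * (α + α⁻¹) by
      rw [mul_assoc, mul_assoc, hSgP, mul_one]]
  -- E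
  have hE : P' * (Complex.I • (α + α⁻¹) + L' * (Lᴴ * P)) = Complex.I • (αᴴ * P) := by
    rw [hB]
    simp only [Matrix.mul_add, mul_smul_comm, smul_sub, smul_smul, Complex.I_mul_I,
      neg_smul, one_smul, sub_neg_eq_add, Matrix.mul_assoc]
  -- commutation helpers in right-assoc form
  have hRα : ∀ X : Matrix (Fin N) (Fin m ⊕ Fin m) ℂ, R * (α * X) = α * (R * X) := by
    intro X; rw [← Matrix.mul_assoc, ← hαR, Matrix.mul_assoc]
  have hRα' : ∀ X : Matrix (Fin N) (Fin m ⊕ Fin m) ℂ, R * (α⁻¹ * X) = α⁻¹ * (R * X) := by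
    intro X; rw [← Matrix.mul_assoc, ← hαR', Matrix.mul_assoc]
  have hααX : ∀ X : Matrix (Fin N) (Fin m ⊕ Fin m) ℂ, α * (α⁻¹ * X) = X := by
    intro X; rw [← Matrix.mul_assoc, hαα, Matrix.one_mul]
  -- identity (i)
  have hi : Complex.I • (α * (R * L')) + (R * L') * J
      = Complex.I • (α * (R * L)) + Complex.I • (α⁻¹ * (R * L)) := by
    rw [hΛ]
    simp only [Matrix.mul_add, Matrix.add_mul, Matrix.mul_smul, Matrix.smul_mul, smul_add,
      smul_smul, Complex.I_mul_I, neg_smul, one_smul, Matrix.mul_assoc, hRα', hJ2,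
      Matrix.mul_one, hααX]
    abel
  have hdiv : ∀ X : Matrix (Fin m ⊕ Fin m) (Fin m ⊕ Fin m) ℂ,
      (1 : Matrix (Fin m ⊕ Fin m) (Fin m ⊕ Fin m) ℂ) - (Complex.I / lam) • X
        = lam⁻¹ • (lam • 1 - Complex.I • X) := by
    intro X
    rw [smul_sub, smul_smul, smul_smul, inv_mul_cancel₀ hlam, one_smul, div_eq_inv_mul]
  rw [hdiv J, hdiv _, Matrix.mul_smul, Matrix.smul_mul]
  congr 1
  simp only [Matrix.add_mul, Matrix.mul_add, Matrix.mul_sub, Matrix.sub_mul, Matrix.smul_mul,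
    Matrix.mul_smul, smul_smul, smul_add, smul_sub, Matrix.one_mul, Matrix.mul_one,
    Matrix.mul_assoc, Complex.I_mul_I, neg_smul, one_smul, smul_neg, neg_neg]
  have hlamRX : ∀ X : Matrix (Fin N) (Fin m ⊕ Fin m) ℂ, lam • (R * X) = X + α * (R * X) := by
    intro X; rw [← Matrix.smul_mul, hlamR, Matrix.add_mul, Matrix.one_mul, Matrix.mul_assoc]
  have e4 : (lam * Complex.I) • (L'ᴴ * (P' * (R * L')))
      = Complex.I • (L'ᴴ * (P' * L')) + Complex.I • (L'ᴴ * (P' * (α * (R * L')))) := by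
    rw [mul_comm, ← smul_smul,
      show lam • (L'ᴴ * (P' * (R * L'))) = L'ᴴ * (P' * (lam • (R * L'))) by
        simp [Matrix.mul_smul],
      hlamRX, Matrix.mul_add, Matrix.mul_add, smul_add]
  have e5 : (Complex.I * lam) • (Lᴴ * (P * (R * L)))
      = Complex.I • (Lᴴ * (P * L)) + Complex.I • (Lᴴ * (P * (α * (R * L)))) := by
    rw [← smul_smul,
      show lam • (Lᴴ * (P * (R * L))) = Lᴴ * (P * (lam • (R * L))) by
        simp [Matrix.mul_smul],
      hlamRX, Matrix.mul_add, Matrix.mul_add, smul_add]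
  have e6 : L'ᴴ * (P' * (R * (L' * J)))
      = Complex.I • (L'ᴴ * (P' * (α * (R * L)))) + Complex.I • (L'ᴴ * (P' * (α⁻¹ * (R * L))))
        - Complex.I • (L'ᴴ * (P' * (α * (R * L')))) := by
    have h2 : R * (L' * J) = Complex.I • (α * (R * L)) + Complex.I • (α⁻¹ * (R * L))
        - Complex.I • (α * (R * L')) := by
      rw [← Matrix.mul_assoc]
      exact eq_sub_of_add_eq' hi
    rw [h2]
    simp [Matrix.mul_add, Matrix.mul_sub, Matrix.mul_smul, Matrix.mul_assoc]
  have e7 : Complex.I • (L'ᴴ * (P' * (α⁻¹ * (R * L))))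
      = Complex.I • (L'ᴴ * (αᴴ * (P * (R * L)))) - Complex.I • (L'ᴴ * (P' * (α * (R * L))))
        - L'ᴴ * (P' * (L' * (Lᴴ * (P * (R * L))))) := by
    have h := congrArg (fun X => L'ᴴ * (X * (R * L))) hE
    simp only [Matrix.mul_add, Matrix.add_mul, Matrix.mul_smul, Matrix.smul_mul, smul_add,
      Matrix.mul_assoc] at h
    rw [← h]
    abel
  have e8 : J * (Lᴴ * (P * (R * L)))
      = Complex.I • (L'ᴴ * (αᴴ * (P * (R * L)))) - Complex.I • (Lᴴ * (αᴴ * (P * (R * L)))) := by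
    have h := congrArg (fun X => X * (P * (R * L))) hJLH
    simp only [Matrix.sub_mul, Matrix.smul_mul, smul_sub, Matrix.mul_assoc] at h
    exact h
  have e9 : Complex.I • (Lᴴ * (αᴴ * (P * (R * L))))
      = Complex.I • (Lᴴ * (P * (α * (R * L)))) + Lᴴ * (P * (L * (Lᴴ * (P * (R * L))))) := by
    have h := congrArg (fun X => Complex.I • (Lᴴ * (X * (R * L)))) hD
    simp only [Matrix.sub_mul, Matrix.mul_sub, Matrix.smul_mul, Matrix.mul_smul, smul_sub,
      smul_smul, Complex.I_mul_I, neg_smul, one_smul, sub_neg_eq_add, Matrix.mul_assoc] at h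
    exact h
  rw [e4, e5, e6, e7, e8, e9]
  module


theorem stmt9 {N m : ℕ} (M : ℕ)
    (α : Matrix (Fin N) (Fin N) ℂ) (hα : IsUnit α)
    (J : Matrix (Fin m ⊕ Fin m) (Fin m ⊕ Fin m) ℂ)
    (hJ : J = Matrix.fromBlocks 1 0 0 (-1))
    (Sig : ℕ → Matrix (Fin N) (Fin N) ℂ)
    (Λ : ℕ → Matrix (Fin N) (Fin m ⊕ Fin m) ℂ)
    (hid : ∀ n, α * Sig n - Sig n * αᴴ = Complex.I • (Λ n * (Λ n)ᴴ))
    (hΛ : ∀ n, Λ (n + 1) = Λ n + Complex.I • (α⁻¹ * Λ n * J))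
    (hSig : ∀ n, Sig (n + 1) =
      Sig n + α⁻¹ * Sig n * (αᴴ)⁻¹ + α⁻¹ * Λ n * J * (Λ n)ᴴ * (αᴴ)⁻¹)
    (hinv : ∀ n ≤ M, IsUnit (Sig n))
    (S : ℕ → Matrix (Fin m ⊕ Fin m) (Fin m ⊕ Fin m) ℂ)
    (hS : ∀ n, n + 1 ≤ M → S n =
      J + (Λ n)ᴴ * (Sig n)⁻¹ * Λ n - (Λ (n + 1))ᴴ * (Sig (n + 1))⁻¹ * Λ (n + 1))
    (Wa : ℕ → ℂ → Matrix (Fin m ⊕ Fin m) (Fin m ⊕ Fin m) ℂ)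
    (hWa : ∀ n lam, Wa n lam = 1 + Complex.I •
      ((Λ n)ᴴ * (Sig n)⁻¹ * (lam • (1 : Matrix (Fin N) (Fin N) ℂ) - α)⁻¹ * Λ n))
    (W : ℕ → ℂ → Matrix (Fin m ⊕ Fin m) (Fin m ⊕ Fin m) ℂ)
    (lam : ℂ) (hlam : lam ≠ 0)
    (hres : IsUnit (lam • (1 : Matrix (Fin N) (Fin N) ℂ) - α))
    (hW0inv : IsUnit (Wa 0 lam))
    (hW0 : W 0 lam = 1)
    (hWrec : ∀ n, n + 1 ≤ M →
      W (n + 1) lam = (1 - (Complex.I / lam) • S n) * W n lam) :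
    ∀ n ≤ M, W n lam = Wa n lam * (1 - (Complex.I / lam) • J) ^ n * (Wa 0 lam)⁻¹ := by
  have key : ∀ n, n + 1 ≤ M → Wa (n + 1) lam * (1 - (Complex.I / lam) • J)
      = (1 - (Complex.I / lam) • S n) * Wa n lam := by
    intro n hn
    rw [hWa, hWa, hS n hn]
    exact fg_intertwine α (Sig n) (Sig (n + 1)) hα J hJ (Λ n) (Λ (n + 1)) (hid n) (hΛ n)
      (hSig n) (hinv n (Nat.le_of_succ_le hn)) (hinv (n + 1) hn) lam hlam hres
  intro n
  induction n with
  | zero =>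
    intro _
    simp [hW0, Matrix.mul_nonsing_inv _ ((Matrix.isUnit_iff_isUnit_det _).1 hW0inv)]
  | succ k ih =>
    intro hk
    have hk' : k ≤ M := Nat.le_of_succ_le hk
    calc W (k+1) lam = (1 - (Complex.I / lam) • S k) * W k lam := hWrec k hk
    _ = ((1 - (Complex.I / lam) • S k) * Wa k lam) * ((1 - (Complex.I / lam) • J) ^ k * (Wa 0 lam)⁻¹) := by
        rw [ih hk']; noncomm_ring
    _ = (Wa (k+1) lam * (1 - (Complex.I / lam) • J)) * ((1 - (Complex.I / lam) • J) ^ k * (Wa 0 lam)⁻¹) := by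
        rw [key k hk]
    _ = Wa (k+1) lam * (1 - (Complex.I / lam) • J) ^ (k+1) * (Wa 0 lam)⁻¹ := by
        rw [pow_succ']; noncomm_ring
end

section
/- Let α be an invertible N×N matrix with i ∉ σ(α), Σ₀ = Σ₀* Hermitian, Λ₀ satisfying αΣ₀ − Σ₀α* = iΛ₀Λ₀*, with Λ_n, Σ_n defined by the FG recursions. Define R_n = (I_N − iα⁻¹)^{−n} Σ_n (I_N + i(α*)⁻¹)^{−n}. Then Σ_{n+1} − (I_N − iα⁻¹) Σ_n (I_N + i(α*)⁻¹) = α⁻¹ Λ_n (J + I_{2m}) Λ_n* (α*)⁻¹ ≥ 0, and consequently the sequence {R_n} is non-decreasing (R_{n+1} ≥ R_n in the semidefinite order). -/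
open Matrix
open scoped ComplexOrder

theorem stmt11 {N m : ℕ}
    (α : Matrix (Fin N) (Fin N) ℂ) (hα : IsUnit α)
    (hi : IsUnit (Complex.I • (1 : Matrix (Fin N) (Fin N) ℂ) - α))
    (J : Matrix (Fin m ⊕ Fin m) (Fin m ⊕ Fin m) ℂ)
    (hJ : J = Matrix.fromBlocks 1 0 0 (-1))
    (Sig : ℕ → Matrix (Fin N) (Fin N) ℂ)
    (Λ : ℕ → Matrix (Fin N) (Fin m ⊕ Fin m) ℂ)
    (hSig0 : (Sig 0)ᴴ = Sig 0)
    (h0 : α * Sig 0 - Sig 0 * αᴴ = Complex.I • (Λ 0 * (Λ 0)ᴴ))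
    (hΛ : ∀ n, Λ (n + 1) = Λ n + Complex.I • (α⁻¹ * Λ n * J))
    (hSig : ∀ n, Sig (n + 1) =
      Sig n + α⁻¹ * Sig n * (αᴴ)⁻¹ + α⁻¹ * Λ n * J * (Λ n)ᴴ * (αᴴ)⁻¹)
    (R : ℕ → Matrix (Fin N) (Fin N) ℂ)
    (hR : ∀ n, R n =
      (((1 : Matrix (Fin N) (Fin N) ℂ) - Complex.I • α⁻¹) ^ n)⁻¹ * Sig n *
        (((1 : Matrix (Fin N) (Fin N) ℂ) + Complex.I • (αᴴ)⁻¹) ^ n)⁻¹) :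
    ∀ n,
      Sig (n + 1) -
        ((1 : Matrix (Fin N) (Fin N) ℂ) - Complex.I • α⁻¹) * Sig n *
          ((1 : Matrix (Fin N) (Fin N) ℂ) + Complex.I • (αᴴ)⁻¹) =
        α⁻¹ * Λ n * (J + 1) * (Λ n)ᴴ * (αᴴ)⁻¹ ∧
      (α⁻¹ * Λ n * (J + 1) * (Λ n)ᴴ * (αᴴ)⁻¹).PosSemidef ∧
      (R (n + 1) - R n).PosSemidef := by
  have hαd : IsUnit α.det := (Matrix.isUnit_iff_isUnit_det α).mp hα
  have hαHd : IsUnit (αᴴ).det := by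
    rw [Matrix.det_conjTranspose]; exact hαd.star
  have ha1 : α * α⁻¹ = 1 := Matrix.mul_nonsing_inv α hαd
  have ha2 : α⁻¹ * α = 1 := Matrix.nonsing_inv_mul α hαd
  have hb1 : αᴴ * (αᴴ)⁻¹ = 1 := Matrix.mul_nonsing_inv _ hαHd
  have hb2 : (αᴴ)⁻¹ * αᴴ = 1 := Matrix.nonsing_inv_mul _ hαHd
  have hc : ∀ {k : ℕ} (X : Matrix (Fin N) (Fin k) ℂ), α * (α⁻¹ * X) = X :=
    fun X => Matrix.mul_nonsing_inv_cancel_left α X hαd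
  have hc2 : ∀ (X : Matrix (Fin N) (Fin m ⊕ Fin m) ℂ), α * (α⁻¹ * X) = X :=
    fun X => Matrix.mul_nonsing_inv_cancel_left α X hαd
  have hJH : Jᴴ = J := by
    subst hJ
    simp [Matrix.fromBlocks_conjTranspose]
  have hJc : ∀ {k : Type} [Fintype k] (X : Matrix (Fin m ⊕ Fin m) k ℂ),
      J * (J * X) = X := by
    intro k _ X
    rw [← Matrix.mul_assoc]
    subst hJ
    simp [Matrix.fromBlocks_multiply, Matrix.fromBlocks_one]
  -- the key invariant
  have key : ∀ n, α * Sig n - Sig n * αᴴ = Complex.I • (Λ n * (Λ n)ᴴ) := by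
    intro n
    induction n with
    | zero => exact h0
    | succ n ih =>
      have hA : α * Sig n = Sig n * αᴴ + Complex.I • (Λ n * (Λ n)ᴴ) := by
        linear_combination (norm := module) ih
      have hB : Sig n * (αᴴ)⁻¹ =
          α⁻¹ * Sig n + Complex.I • (α⁻¹ * (Λ n * ((Λ n)ᴴ * (αᴴ)⁻¹))) := by
        have := congrArg (fun X => α⁻¹ * X * (αᴴ)⁻¹) ih
        simp only [Matrix.mul_sub, Matrix.sub_mul, Matrix.mul_smul,
          Matrix.smul_mul, Matrix.mul_assoc] at this
        rw [Matrix.nonsing_inv_mul_cancel_left α _ hαd, hb1, Matrix.mul_one] at this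
        linear_combination (norm := module) this
      rw [hSig n, hΛ n]
      simp only [Matrix.mul_add, Matrix.add_mul, Matrix.mul_sub, Matrix.sub_mul,
        conjTranspose_add, conjTranspose_smul, conjTranspose_mul,
        Matrix.conjTranspose_nonsing_inv, hJH, Complex.star_def, Complex.conj_I,
        Matrix.mul_smul, Matrix.smul_mul, smul_smul, Matrix.mul_assoc, hc, hJc,
        neg_mul, Complex.I_mul_I, neg_smul, neg_neg, one_smul, smul_add, smul_neg,
        mul_neg, Matrix.mul_one, hb2]
      simp only [Matrix.mul_neg, Matrix.mul_smul, smul_smul, Complex.I_mul_I,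
        neg_smul, neg_neg, one_smul, smul_neg, hJc]
      linear_combination (norm := module) hA + hB
  have hB : ∀ n, α⁻¹ * (Λ n * ((Λ n)ᴴ * (αᴴ)⁻¹)) =
      Complex.I • (α⁻¹ * Sig n) - Complex.I • (Sig n * (αᴴ)⁻¹) := by
    intro n
    have := congrArg (fun X => α⁻¹ * X * (αᴴ)⁻¹) (key n)
    simp only [Matrix.mul_sub, Matrix.sub_mul, Matrix.mul_smul,
      Matrix.smul_mul, Matrix.mul_assoc] at this
    rw [Matrix.nonsing_inv_mul_cancel_left α _ hαd, hb1, Matrix.mul_one] at this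
    have h2 := congrArg (fun X : Matrix (Fin N) (Fin N) ℂ => (-Complex.I) • X) this
    simp only [smul_sub, smul_smul, neg_mul, Complex.I_mul_I, neg_neg,
      one_smul, neg_smul] at h2
    linear_combination (norm := module) -h2
  set P : Matrix (Fin N) (Fin N) ℂ := 1 - Complex.I • α⁻¹ with hPdef
  set Q : Matrix (Fin N) (Fin N) ℂ := 1 + Complex.I • (αᴴ)⁻¹ with hQdef
  have hQP : Q = Pᴴ := by
    rw [hPdef, hQdef]
    simp [Matrix.conjTranspose_sub, Matrix.conjTranspose_one,
      Matrix.conjTranspose_smul, Complex.star_def, Complex.conj_I,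
      Matrix.conjTranspose_nonsing_inv, neg_smul, sub_neg_eq_add]
  have hPu : IsUnit P := by
    have h1 : P = α⁻¹ * (α - Complex.I • 1) := by
      rw [Matrix.mul_sub, ha2, Matrix.mul_smul, Matrix.mul_one]
    rw [h1]
    exact (Matrix.isUnit_nonsing_inv_iff.mpr hα).mul (by simpa [neg_sub] using hi.neg)
  have hPd : IsUnit P.det := (Matrix.isUnit_iff_isUnit_det P).mp hPu
  have hQd : IsUnit Q.det := by
    rw [hQP, Matrix.det_conjTranspose]; exact hPd.star
  -- part 1
  intro n
  have hpart1 : Sig (n + 1) - P * Sig n * Q =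
      α⁻¹ * Λ n * (J + 1) * (Λ n)ᴴ * (αᴴ)⁻¹ := by
    rw [hSig n, hPdef, hQdef]
    simp only [Matrix.mul_add, Matrix.add_mul, Matrix.mul_sub, Matrix.sub_mul,
      Matrix.one_mul, Matrix.mul_one, Matrix.smul_mul, Matrix.mul_smul,
      smul_smul, Complex.I_mul_I, neg_smul, neg_neg, one_smul, smul_neg,
      smul_sub, smul_add, Matrix.mul_assoc]
    linear_combination (norm := module) -hB n
  -- part 2
  have hJ1 : (J + 1).PosSemidef := by
    have h2 : J + 1 =
        (Matrix.fromBlocks (((Real.sqrt 2 : ℝ) : ℂ) • 1) 0 0 0)ᴴ *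
          (Matrix.fromBlocks (((Real.sqrt 2 : ℝ) : ℂ) • 1) 0 0 0) := by
      subst hJ
      rw [← Matrix.fromBlocks_one, Matrix.fromBlocks_add,
        Matrix.fromBlocks_conjTranspose, Matrix.fromBlocks_multiply]
      congr 1 <;> simp [smul_smul, ← Complex.ofReal_mul, Real.mul_self_sqrt,
        two_smul]
    rw [h2]
    exact Matrix.posSemidef_conjTranspose_mul_self _
  have hM : (α⁻¹ * Λ n * (J + 1) * (Λ n)ᴴ * (αᴴ)⁻¹).PosSemidef := by
    have h3 := hJ1.mul_mul_conjTranspose_same (α⁻¹ * Λ n)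
    simpa only [Matrix.conjTranspose_mul, Matrix.conjTranspose_nonsing_inv,
      Matrix.mul_assoc] using h3
  refine ⟨hpart1, hM, ?_⟩
  -- part 3
  have hQinv : ∀ k : ℕ, ((Q ^ k))⁻¹ = ((P ^ k)⁻¹)ᴴ := by
    intro k
    rw [hQP, ← Matrix.conjTranspose_pow, ← Matrix.conjTranspose_nonsing_inv]
  have hre : R (n + 1) - R n =
      (P ^ (n + 1))⁻¹ * (Sig (n + 1) - P * Sig n * Q) * ((P ^ (n + 1))⁻¹)ᴴ := by
    rw [hR, hR, hQinv, hQinv, Matrix.mul_sub, Matrix.sub_mul]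
    congr 1
    rw [← hQinv, ← hQinv]
    have e1 : (P ^ (n + 1))⁻¹ * (P * Sig n * Q) = (P ^ n)⁻¹ * Sig n * Q := by
      rw [pow_succ' P n, Matrix.mul_inv_rev, Matrix.mul_assoc,
        ← Matrix.mul_assoc P⁻¹, ← Matrix.mul_assoc P⁻¹,
        Matrix.nonsing_inv_mul P hPd, Matrix.one_mul, Matrix.mul_assoc]
    have e2 : (P ^ n)⁻¹ * Sig n * Q * (Q ^ (n + 1))⁻¹ =
        (P ^ n)⁻¹ * Sig n * (Q ^ n)⁻¹ := by
      rw [pow_succ Q n, Matrix.mul_inv_rev, ← Matrix.mul_assoc,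
        Matrix.mul_assoc _ Q Q⁻¹, Matrix.mul_nonsing_inv Q hQd,
        Matrix.mul_one]
    rw [e1, e2]
  rw [hre, hpart1]
  exact hM.mul_mul_conjTranspose_same _
end

section
/- Let α be an invertible N×N matrix with −i ∉ σ(α), and Λ_n, Σ_n as in the FG construction with αΣ_n − Σ_nα* = iΛ_nΛ_n*. Define Q_n = (I_N + iα⁻¹)^{−n} Σ_n (I_N − i(α*)⁻¹)^{−n}. Then Σ_{n+1} − (I_N + iα⁻¹) Σ_n (I_N − i(α*)⁻¹) = α⁻¹ Λ_n (J − I_{2m}) Λ_n* (α*)⁻¹ ≤ 0, and the sequence {Q_n} is non-increasing. -/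
open Matrix
open scoped ComplexOrder

theorem stmt12 {N m : ℕ}
    (α : Matrix (Fin N) (Fin N) ℂ) (hα : IsUnit α)
    (hi : IsUnit ((-Complex.I) • (1 : Matrix (Fin N) (Fin N) ℂ) - α))
    (J : Matrix (Fin m ⊕ Fin m) (Fin m ⊕ Fin m) ℂ)
    (hJ : J = Matrix.fromBlocks 1 0 0 (-1))
    (Sig : ℕ → Matrix (Fin N) (Fin N) ℂ)
    (Λ : ℕ → Matrix (Fin N) (Fin m ⊕ Fin m) ℂ)
    (hSig0 : (Sig 0)ᴴ = Sig 0)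
    (h0 : α * Sig 0 - Sig 0 * αᴴ = Complex.I • (Λ 0 * (Λ 0)ᴴ))
    (hΛ : ∀ n, Λ (n + 1) = Λ n + Complex.I • (α⁻¹ * Λ n * J))
    (hSig : ∀ n, Sig (n + 1) =
      Sig n + α⁻¹ * Sig n * (αᴴ)⁻¹ + α⁻¹ * Λ n * J * (Λ n)ᴴ * (αᴴ)⁻¹)
    (Q : ℕ → Matrix (Fin N) (Fin N) ℂ)
    (hQ : ∀ n, Q n =
      (((1 : Matrix (Fin N) (Fin N) ℂ) + Complex.I • α⁻¹) ^ n)⁻¹ * Sig n *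
        (((1 : Matrix (Fin N) (Fin N) ℂ) - Complex.I • (αᴴ)⁻¹) ^ n)⁻¹) :
    ∀ n,
      Sig (n + 1) -
        ((1 : Matrix (Fin N) (Fin N) ℂ) + Complex.I • α⁻¹) * Sig n *
          ((1 : Matrix (Fin N) (Fin N) ℂ) - Complex.I • (αᴴ)⁻¹) =
        α⁻¹ * Λ n * (J - 1) * (Λ n)ᴴ * (αᴴ)⁻¹ ∧
      (-(α⁻¹ * Λ n * (J - 1) * (Λ n)ᴴ * (αᴴ)⁻¹)).PosSemidef ∧
      (Q n - Q (n + 1)).PosSemidef := by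
  have hαd : IsUnit α.det := (Matrix.isUnit_iff_isUnit_det α).mp hα
  have hA1 : α * α⁻¹ = 1 := Matrix.mul_nonsing_inv α hαd
  have hA2 : α⁻¹ * α = 1 := Matrix.nonsing_inv_mul α hαd
  have hαHd : IsUnit αᴴ.det := by rw [Matrix.det_conjTranspose]; exact hαd.star
  have hH1 : αᴴ * (αᴴ)⁻¹ = 1 := Matrix.mul_nonsing_inv _ hαHd
  have hH2 : (αᴴ)⁻¹ * αᴴ = 1 := Matrix.nonsing_inv_mul _ hαHd
  have hJH : Jᴴ = J := by
    subst hJ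
    simp [Matrix.fromBlocks_conjTranspose]
  have hinvH : (α⁻¹)ᴴ = (αᴴ)⁻¹ := Matrix.conjTranspose_nonsing_inv α
  have c2 : ∀ {k : Type} (X : Matrix (Fin N) k ℂ), α⁻¹ * (α * X) = X := by
    intro k X; rw [← Matrix.mul_assoc, hA2, Matrix.one_mul]
  have c1 : ∀ {k : Type} (X : Matrix (Fin N) k ℂ), α * (α⁻¹ * X) = X := by
    intro k X; rw [← Matrix.mul_assoc, hA1, Matrix.one_mul]
  have cJ : ∀ {k : Type} [Fintype k] (X : Matrix (Fin m ⊕ Fin m) k ℂ), J * (J * X) = X := by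
    intro k _ X
    rw [← Matrix.mul_assoc]
    have hJJ : J * J = 1 := by
      subst hJ
      rw [Matrix.fromBlocks_multiply, ← Matrix.fromBlocks_one]
      norm_num
    rw [hJJ, Matrix.one_mul]
  -- key invariant
  have key : ∀ n, α * Sig n - Sig n * αᴴ = Complex.I • (Λ n * (Λ n)ᴴ) := by
    intro n
    induction n with
    | zero => exact h0
    | succ n ih =>
      have hcross : Sig n * (αᴴ)⁻¹ - α⁻¹ * Sig n
          = Complex.I • (α⁻¹ * (Λ n * ((Λ n)ᴴ * (αᴴ)⁻¹))) := by
        have h := congrArg (fun X => α⁻¹ * X * (αᴴ)⁻¹) ih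
        simp only [Matrix.mul_sub, Matrix.sub_mul, Matrix.mul_smul, Matrix.smul_mul,
          Matrix.mul_assoc, hH1, Matrix.mul_one, c2] at h
        exact h
      rw [hSig n, hΛ n]
      simp only [Matrix.conjTranspose_add, Matrix.conjTranspose_smul, Complex.star_def,
        Complex.conj_I, Matrix.conjTranspose_mul, hJH, hinvH,
        Matrix.mul_add, Matrix.add_mul, Matrix.mul_sub, Matrix.sub_mul,
        Matrix.mul_smul, Matrix.smul_mul, smul_smul, Matrix.mul_assoc,
        Complex.I_mul_I, neg_mul, mul_neg, neg_neg, one_smul, neg_smul, one_mul, mul_one,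
        Complex.I_mul_I, smul_add, smul_sub, smul_neg, Matrix.mul_neg, Matrix.neg_mul,
        c1, c2, cJ, hH1, hH2, Matrix.mul_one, Matrix.one_mul]
      rw [← ih, ← hcross]
      abel
  have hcross : ∀ n, Sig n * (αᴴ)⁻¹ - α⁻¹ * Sig n
      = Complex.I • (α⁻¹ * (Λ n * ((Λ n)ᴴ * (αᴴ)⁻¹))) := by
    intro n
    have h := congrArg (fun X => α⁻¹ * X * (αᴴ)⁻¹) (key n)
    simp only [Matrix.mul_sub, Matrix.sub_mul, Matrix.mul_smul, Matrix.smul_mul,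
      Matrix.mul_assoc, hH1, Matrix.mul_one, c2] at h
    exact h
  have part1 : ∀ n, Sig (n + 1) -
      ((1 : Matrix (Fin N) (Fin N) ℂ) + Complex.I • α⁻¹) * Sig n *
        ((1 : Matrix (Fin N) (Fin N) ℂ) - Complex.I • (αᴴ)⁻¹) =
      α⁻¹ * Λ n * (J - 1) * (Λ n)ᴴ * (αᴴ)⁻¹ := by
    intro n
    have hc' : Sig n * (αᴴ)⁻¹
        = Complex.I • (α⁻¹ * (Λ n * ((Λ n)ᴴ * (αᴴ)⁻¹))) + α⁻¹ * Sig n :=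
      sub_eq_iff_eq_add.mp (hcross n)
    rw [hSig n]
    simp only [Matrix.mul_add, Matrix.add_mul, Matrix.mul_sub, Matrix.sub_mul,
      Matrix.mul_smul, Matrix.smul_mul, smul_smul, Matrix.mul_assoc,
      Complex.I_mul_I, neg_mul, mul_neg, neg_neg, one_smul, neg_smul, one_mul, mul_one,
      smul_add, smul_sub, smul_neg, Matrix.mul_neg, Matrix.neg_mul,
      c1, c2, cJ, hH1, hH2, Matrix.mul_one, Matrix.one_mul, hc']
    abel
  have part2 : ∀ n, (-(α⁻¹ * Λ n * (J - 1) * (Λ n)ᴴ * (αᴴ)⁻¹)).PosSemidef := by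
    intro n
    have h1 : ((Matrix.fromBlocks 0 0 0 1 :
        Matrix (Fin m ⊕ Fin m) (Fin m ⊕ Fin m) ℂ)).PosSemidef := by
      have h := Matrix.posSemidef_conjTranspose_mul_self
        ((Matrix.fromBlocks 0 0 0 1 : Matrix (Fin m ⊕ Fin m) (Fin m ⊕ Fin m) ℂ))
      simpa [Matrix.fromBlocks_conjTranspose, Matrix.fromBlocks_multiply] using h
    have hM : ((1 : Matrix (Fin m ⊕ Fin m) (Fin m ⊕ Fin m) ℂ) - J).PosSemidef := by
      have he : (1 : Matrix (Fin m ⊕ Fin m) (Fin m ⊕ Fin m) ℂ) - J =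
          Matrix.fromBlocks 0 0 0 1 + Matrix.fromBlocks 0 0 0 1 := by
        subst hJ
        rw [← Matrix.fromBlocks_one]
        ext i j
        rcases i with i | i <;> rcases j with j | j <;>
          simp [Matrix.fromBlocks, Matrix.sub_apply, Matrix.add_apply]
      rw [he]
      exact h1.add h1
    have key2 : -(α⁻¹ * Λ n * (J - 1) * (Λ n)ᴴ * (αᴴ)⁻¹)
        = (α⁻¹ * Λ n) * ((1 : Matrix (Fin m ⊕ Fin m) (Fin m ⊕ Fin m) ℂ) - J) *
          (α⁻¹ * Λ n)ᴴ := by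
      simp only [Matrix.conjTranspose_mul, hinvH, Matrix.mul_sub, Matrix.sub_mul,
        Matrix.mul_assoc, Matrix.mul_one, Matrix.one_mul, neg_sub]
    rw [key2]
    exact hM.mul_mul_conjTranspose_same _
  -- invertibility of A = 1 + I • α⁻¹
  set A : Matrix (Fin N) (Fin N) ℂ := 1 + Complex.I • α⁻¹ with hAdef
  have hBA : (1 : Matrix (Fin N) (Fin N) ℂ) - Complex.I • (αᴴ)⁻¹ = Aᴴ := by
    rw [hAdef]
    simp [Matrix.conjTranspose_add, Matrix.conjTranspose_smul, Complex.star_def,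
      Complex.conj_I, hinvH, Matrix.conjTranspose_one, neg_smul, sub_eq_add_neg]
  have hAu : IsUnit A := by
    have h1 : IsUnit (α + Complex.I • (1 : Matrix (Fin N) (Fin N) ℂ)) := by
      have h := hi.neg
      have he : -((-Complex.I) • (1 : Matrix (Fin N) (Fin N) ℂ) - α)
          = α + Complex.I • (1 : Matrix (Fin N) (Fin N) ℂ) := by
        rw [neg_sub, neg_smul, sub_neg_eq_add, add_comm]
      rwa [he] at h
    have hAeq : A = α⁻¹ * (α + Complex.I • (1 : Matrix (Fin N) (Fin N) ℂ)) := by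
      rw [hAdef, Matrix.mul_add, hA2, mul_smul_comm, Matrix.mul_one]
    have hIu : IsUnit α⁻¹ := ⟨⟨α⁻¹, α, hA2, hA1⟩, rfl⟩
    rw [hAeq]
    exact hIu.mul h1
  have hAd : IsUnit A.det := (Matrix.isUnit_iff_isUnit_det A).mp hAu
  have hAc1 : A⁻¹ * A = 1 := Matrix.nonsing_inv_mul A hAd
  intro n
  refine ⟨part1 n, part2 n, ?_⟩
  have hPA : (A ^ (n + 1))⁻¹ * A = (A ^ n)⁻¹ := by
    rw [pow_succ', Matrix.mul_inv_rev, Matrix.mul_assoc, hAc1, Matrix.mul_one]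
  have e : A * Sig n * Aᴴ - Sig (n + 1)
      = -(α⁻¹ * Λ n * (J - 1) * (Λ n)ᴴ * (αᴴ)⁻¹) := by
    have h := part1 n
    rw [hBA] at h
    rw [← neg_sub, h]
  have hdiff : Q n - Q (n + 1)
      = (A ^ (n + 1))⁻¹ * (-(α⁻¹ * Λ n * (J - 1) * (Λ n)ᴴ * (αᴴ)⁻¹)) *
        ((A ^ (n + 1))⁻¹)ᴴ := by
    rw [hQ n, hQ (n + 1), hBA, ← Matrix.conjTranspose_pow,
      ← Matrix.conjTranspose_pow, ← Matrix.conjTranspose_nonsing_inv,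
      ← Matrix.conjTranspose_nonsing_inv, ← hPA, ← e]
    simp only [Matrix.conjTranspose_mul, Matrix.mul_sub, Matrix.sub_mul, Matrix.mul_assoc]
  rw [hdiff]
  exact (part2 n).mul_mul_conjTranspose_same _
end

section
/- Let α be invertible with i ∉ σ(α), Σ₀ positive definite Hermitian, and αΣ₀ − Σ₀α* = iΛ₀Λ₀*, with Σ_n defined by the FG recursion. Then Σ_n is positive definite for all n ≥ 0. -/
/-! The commutator identity `α Σ - Σ αᴴ = i Λ Λᴴ` is preserved by the FG step because `J` is a
Hermitian involution. Under it the step becomes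
`Σ' = B Σ Bᴴ + (α⁻¹ Λ) (1 + J) (α⁻¹ Λ)ᴴ` with `B = 1 - i α⁻¹ = -α⁻¹ (i - α)` invertible, and
`1 + J = ½ (1 + J)ᴴ (1 + J)` is positive semidefinite, so `Σ'` is positive definite with `Σ`. -/

open Matrix
open scoped ComplexOrder

namespace Matrix

lemma isHermitian_fromBlocks_one_neg_one {k 𝕜 : Type*} [DecidableEq k] [CommRing 𝕜]
    [StarRing 𝕜] :
    (fromBlocks 1 0 0 (-1) : Matrix (k ⊕ k) (k ⊕ k) 𝕜).IsHermitian := by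
  simp [IsHermitian, fromBlocks_conjTranspose]

lemma fromBlocks_one_neg_one_mul_self {k 𝕜 : Type*} [Fintype k] [DecidableEq k] [CommRing 𝕜] :
    (fromBlocks 1 0 0 (-1) : Matrix (k ⊕ k) (k ⊕ k) 𝕜) * fromBlocks 1 0 0 (-1) = 1 := by
  simp [fromBlocks_multiply, ← fromBlocks_one]

lemma IsHermitian.posSemidef_one_add_of_mul_self_eq_one {k 𝕜 : Type*} [Fintype k] [DecidableEq k]
    [RCLike 𝕜] {J : Matrix k k 𝕜} (hJ : J.IsHermitian) (hJJ : J * J = 1) :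
    (1 + J).PosSemidef := by
  have h : 1 + J = (2⁻¹ : ℝ) • ((1 + J)ᴴ * (1 + J)) := by
    rw [conjTranspose_add, conjTranspose_one, hJ.eq, add_mul, mul_add, mul_add, hJJ, one_mul,
      one_mul, mul_one]
    module
  rw [h]
  exact (posSemidef_conjTranspose_mul_self _).smul (by norm_num)

lemma isUnit_one_sub_smul_inv {n 𝕜 : Type*} [Fintype n] [DecidableEq n] [Field 𝕜]
    {α : Matrix n n 𝕜} (hα : IsUnit α) {c : 𝕜} (hc : IsUnit (c • 1 - α)) :
    IsUnit (1 - c • α⁻¹) := by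
  have h : 1 - c • α⁻¹ = -(α⁻¹ * (c • 1 - α)) := by
    rw [mul_sub, Matrix.mul_smul, mul_one, nonsing_inv_mul α ((isUnit_iff_isUnit_det α).mp hα)]
    abel
  rw [h]
  exact ((isUnit_nonsing_inv_iff.mpr hα).mul hc).neg

lemma mul_conjTranspose_inv_sub_inv_mul_of_commutator {n 𝕜 : Type*} [Fintype n] [DecidableEq n]
    [Field 𝕜] [StarRing 𝕜] {α S C : Matrix n n 𝕜} (hα : IsUnit α)
    (h : α * S - S * αᴴ = C) : S * (αᴴ)⁻¹ - α⁻¹ * S = α⁻¹ * C * (αᴴ)⁻¹ := by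
  have := hα.invertible
  rw [← h, mul_sub, sub_mul, inv_mul_cancel_left_of_invertible, ← mul_assoc α⁻¹ S,
    mul_inv_cancel_right_of_invertible]

end Matrix

namespace FG

variable {n k : Type*} [Fintype n] [DecidableEq n] [Fintype k] [DecidableEq k]

noncomputable def nextSigma (α S : Matrix n n ℂ) (L : Matrix n k ℂ) (J : Matrix k k ℂ) :
    Matrix n n ℂ :=
  S + α⁻¹ * S * (αᴴ)⁻¹ + α⁻¹ * L * J * Lᴴ * (αᴴ)⁻¹

noncomputable def nextLambda (α : Matrix n n ℂ) (L : Matrix n k ℂ) (J : Matrix k k ℂ) :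
    Matrix n k ℂ :=
  L + Complex.I • (α⁻¹ * L * J)

variable {α S : Matrix n n ℂ} {L : Matrix n k ℂ} {J : Matrix k k ℂ}

lemma nextSigma_eq (hα : IsUnit α) (h : α * S - S * αᴴ = Complex.I • (L * Lᴴ)) :
    nextSigma α S L J = (1 - Complex.I • α⁻¹) * S * (1 - Complex.I • α⁻¹)ᴴ
      + (α⁻¹ * L) * (1 + J) * (α⁻¹ * L)ᴴ := by
  have hd := mul_conjTranspose_inv_sub_inv_mul_of_commutator hα h
  have hconj : (1 - Complex.I • α⁻¹) * S * (1 - Complex.I • α⁻¹)ᴴ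
      = S + α⁻¹ * S * (αᴴ)⁻¹ + Complex.I • (S * (αᴴ)⁻¹ - α⁻¹ * S) := by
    simp only [conjTranspose_sub, conjTranspose_one, conjTranspose_smul, conjTranspose_nonsing_inv,
      Complex.star_def, Complex.conj_I, sub_mul, mul_sub, Matrix.one_mul, Matrix.mul_one,
      Matrix.smul_mul, Matrix.mul_smul, Matrix.mul_assoc]
    match_scalars <;> simp
  rw [hconj, hd, nextSigma, conjTranspose_mul, conjTranspose_nonsing_inv]
  simp only [Matrix.mul_add, Matrix.add_mul, Matrix.mul_one, Matrix.smul_mul, Matrix.mul_smul,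
    Matrix.mul_assoc, smul_smul, Complex.I_mul_I, neg_one_smul]
  abel

lemma posDef_nextSigma (hS : S.PosDef) (hα : IsUnit α) (hαI : IsUnit (Complex.I • 1 - α))
    (hJ : J.IsHermitian) (hJJ : J * J = 1) (h : α * S - S * αᴴ = Complex.I • (L * Lᴴ)) :
    (nextSigma α S L J).PosDef := by
  rw [nextSigma_eq hα h]
  exact (hS.mul_mul_conjTranspose_same (vecMul_injective_of_isUnit
    (isUnit_one_sub_smul_inv hα hαI))).add_posSemidef
    ((hJ.posSemidef_one_add_of_mul_self_eq_one hJJ).mul_mul_conjTranspose_same _)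

lemma commutator_nextSigma (hα : IsUnit α) (hJ : J.IsHermitian) (hJJ : J * J = 1)
    (h : α * S - S * αᴴ = Complex.I • (L * Lᴴ)) :
    α * nextSigma α S L J - nextSigma α S L J * αᴴ
      = Complex.I • (nextLambda α L J * (nextLambda α L J)ᴴ) := by
  have hd := mul_conjTranspose_inv_sub_inv_mul_of_commutator hα h
  have hαH : (αᴴ)⁻¹ * αᴴ = 1 :=
    nonsing_inv_mul _ ((isUnit_iff_isUnit_det _).mp ((isUnit_conjTranspose α).mpr hα))
  have := hα.invertible
  have hexpand : α * nextSigma α S L J - nextSigma α S L J * αᴴ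
      = (α * S - S * αᴴ) + (S * (αᴴ)⁻¹ - α⁻¹ * S)
        + (L * J * Lᴴ * (αᴴ)⁻¹ - α⁻¹ * (L * J * Lᴴ)) := by
    simp only [nextSigma, Matrix.mul_add, Matrix.add_mul, Matrix.mul_assoc,
      mul_inv_cancel_left_of_invertible, hαH, Matrix.mul_one]
    abel
  have hgram : nextLambda α L J * (nextLambda α L J)ᴴ
      = L * Lᴴ + α⁻¹ * (L * Lᴴ) * (αᴴ)⁻¹ + Complex.I • (α⁻¹ * (L * J * Lᴴ))
        - Complex.I • (L * J * Lᴴ * (αᴴ)⁻¹) := by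
    have hJJ' : ∀ X : Matrix k n ℂ, J * (J * X) = X := fun X => by
      rw [← Matrix.mul_assoc, hJJ, Matrix.one_mul]
    simp only [nextLambda, conjTranspose_add, conjTranspose_smul, conjTranspose_mul, hJ.eq,
      conjTranspose_nonsing_inv, Complex.star_def, Complex.conj_I, Matrix.add_mul, Matrix.mul_add,
      Matrix.smul_mul, Matrix.mul_smul, Matrix.mul_assoc, hJJ']
    match_scalars <;> simp
  rw [hexpand, h, hd, hgram]
  simp only [Matrix.mul_smul, Matrix.smul_mul, smul_add, smul_sub, smul_smul, Complex.I_mul_I,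
    neg_one_smul]
  abel

end FG

open FG in
theorem stmt13 {N m : ℕ}
    (α : Matrix (Fin N) (Fin N) ℂ) (hα : IsUnit α)
    (hi : IsUnit (Complex.I • (1 : Matrix (Fin N) (Fin N) ℂ) - α))
    (J : Matrix (Fin m ⊕ Fin m) (Fin m ⊕ Fin m) ℂ)
    (hJ : J = Matrix.fromBlocks 1 0 0 (-1))
    (Sig : ℕ → Matrix (Fin N) (Fin N) ℂ)
    (Λ : ℕ → Matrix (Fin N) (Fin m ⊕ Fin m) ℂ)
    (hSig0 : (Sig 0).PosDef)
    (h0 : α * Sig 0 - Sig 0 * αᴴ = Complex.I • (Λ 0 * (Λ 0)ᴴ))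
    (hΛ : ∀ n, Λ (n + 1) = Λ n + Complex.I • (α⁻¹ * Λ n * J))
    (hSig : ∀ n, Sig (n + 1) =
      Sig n + α⁻¹ * Sig n * (αᴴ)⁻¹ + α⁻¹ * Λ n * J * (Λ n)ᴴ * (αᴴ)⁻¹) :
    ∀ n, (Sig n).PosDef := by
  have hJH : J.IsHermitian := hJ ▸ isHermitian_fromBlocks_one_neg_one
  have hJJ : J * J = 1 := hJ ▸ fromBlocks_one_neg_one_mul_self
  suffices h : ∀ n, (Sig n).PosDef ∧ α * Sig n - Sig n * αᴴ = Complex.I • (Λ n * (Λ n)ᴴ) from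
    fun n => (h n).1
  intro n
  induction n with
  | zero => exact ⟨hSig0, h0⟩
  | succ n ih =>
    obtain ⟨hpos, hcomm⟩ := ih
    rw [hSig n, hΛ n]
    exact ⟨posDef_nextSigma hpos hα hi hJH hJJ hcomm, commutator_nextSigma hα hJH hJJ hcomm⟩
end
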